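/- arXiv:1411.4384 — 13 statements merged into one kernel-verified Lean document; each statement's English description precedes it below -/
import Mathlib

section
/- Let f : [0,∞) → [0,∞) be convex and nondecreasing with f(0) = 0, let α ≥ 1, and let p : ℕ → [0,∞) be a nondecreasing pricing function such that f*(p(y)) < ∞ for every integer y ≥ 0 and such that for every integer y ≥ 0: p(y) − (f(y+1) − f(y)) ≥ (1/α)·(f*(p(y+1)) − f*(p(y))). Then for every run of the posted-price mechanism M_p on any sequence of buyers, and for every fractional allocation x, the welfare W of M_p satisfies W ≥ (1/α)·(welfare of x) − (m/α)·f*(p(0)). -/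
open Finset

/-!
The welfare splits into the buyers' utilities plus, for each item, revenue minus production
cost. A buyer's utility is nonnegative and at least her utility for any bundle at the *final*
prices, since prices only rise; averaging over the fractional allocation, it dominates
`1/α` times her fractional utility at final prices. The buyers of item `j` pay
`p 0, …, p (Y - 1)`, so telescoping the key inequality bounds the item's revenue minus cost
below by `(1/α) (f*(p Y) - f*(p 0))`, and Fenchel–Young `f*(p Y) ≥ q · p Y - f q` trades this for
the fractional payments `q · p Y` minus the fractional production cost `f q`.
-/

/-- Convex conjugate of `f` restricted to `[0, ∞)`: `f*(q) = sup_{z ≥ 0} (q·z − f(z))`. -/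
noncomputable def conj (f : ℝ → ℝ) (q : ℝ) : ℝ :=
  sSup ((fun z => q * z - f z) '' Set.Ici 0)

/-- Number of units of item `j` sold to the buyers arriving strictly before time `i`,
under the allocation `S`. -/
def soldCount {m n : ℕ} (S : Fin n → Finset (Fin m)) (j : Fin m) (i : ℕ) : ℕ :=
  (Finset.univ.filter (fun i' : Fin n => (i' : ℕ) < i ∧ j ∈ S i')).card

section SoldCount

variable {m n : ℕ} (S : Fin n → Finset (Fin m)) (j : Fin m)

lemma soldCount_mono : Monotone (soldCount S j) := fun _ _ hik =>
  card_le_card <| monotone_filter_right _ fun _ _ h ↦ ⟨h.1.trans_le hik, h.2⟩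

lemma soldCount_lt_soldCount {i : Fin n} {k : ℕ} (hik : (i : ℕ) < k) (hj : j ∈ S i) :
    soldCount S j i < soldCount S j k := by
  refine card_lt_card <| (ssubset_iff_of_subset ?_).2 ⟨i, by simp [hik, hj], by simp⟩
  exact monotone_filter_right _ fun _ _ h ↦ ⟨h.1.trans hik, h.2⟩

lemma soldCount_injOn : Set.InjOn (fun i : Fin n => soldCount S j i) {i | j ∈ S i} := by
  intro i hi i' hi' h
  by_contra hne
  rcases Fin.lt_or_lt_of_ne hne with hlt | hlt
  · exact (soldCount_lt_soldCount S j hlt hi).ne h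
  · exact (soldCount_lt_soldCount S j hlt hi').ne h.symm

lemma image_soldCount :
    (univ.filter (j ∈ S ·)).image (fun i : Fin n => soldCount S j i) = range (soldCount S j n) := by
  have hcard : #(univ.filter (j ∈ S ·)) = soldCount S j n := by
    simp [soldCount]
  refine eq_of_subset_of_card_le ?_ ?_
  · simp only [image_subset_iff, mem_filter, mem_univ, true_and, mem_range]
    exact fun i hi => soldCount_lt_soldCount S j i.isLt hi
  · rw [card_image_of_injOn (by simpa using soldCount_injOn S j), hcard, card_range]

lemma sum_filter_mem_soldCount {M : Type*} [AddCommMonoid M] (p : ℕ → M) :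
    ∑ i with j ∈ S i, p (soldCount S j i) = ∑ y ∈ range (soldCount S j n), p y := by
  rw [← image_soldCount, sum_image (by simpa using soldCount_injOn S j)]

end SoldCount

lemma sum_sum_mem_soldCount {m n : ℕ} {M : Type*} [AddCommMonoid M]
    (S : Fin n → Finset (Fin m)) (p : ℕ → M) :
    ∑ i, ∑ j ∈ S i, p (soldCount S j i) = ∑ j, ∑ y ∈ range (soldCount S j n), p y := by
  simp_rw [← sum_filter_mem_soldCount]
  exact sum_comm' (by simp)

lemma mul_le_conj_add {f : ℝ → ℝ} {q z : ℝ}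
    (hbdd : BddAbove ((fun z => q * z - f z) '' Set.Ici 0)) (hz : 0 ≤ z) :
    q * z ≤ conj f q + f z := by
  have := le_csSup hbdd ⟨z, hz, rfl⟩
  rw [← conj] at this
  linarith

lemma conj_sub_conj_le_sum_range_sub {f : ℝ → ℝ} {α : ℝ} {p : ℕ → ℝ} (hf0 : f 0 = 0)
    (hkey : ∀ y : ℕ,
      p y - (f ((y : ℝ) + 1) - f (y : ℝ)) ≥ (1/α) * (conj f (p (y+1)) - conj f (p y)))
    (Y : ℕ) :
    ∑ y ∈ range Y, p y - f Y ≥ (1/α) * (conj f (p Y) - conj f (p 0)) := by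
  induction Y with
  | zero => simp [hf0]
  | succ Y ih =>
    rw [sum_range_succ]
    push_cast
    linarith [hkey Y]

lemma sum_mul_sum_mem {ι R : Type*} [Fintype ι] [DecidableEq ι] [CommSemiring R]
    (x : Finset ι → R) (c : ι → R) :
    ∑ T, x T * ∑ j ∈ T, c j = ∑ j, (∑ T with j ∈ T, x T) * c j := by
  simp_rw [mul_sum, sum_mul]
  exact sum_comm' (by simp)

lemma sum_mul_le_of_le {ι : Type*} (s : Finset ι) {x g : ι → ℝ} {U : ℝ}
    (hxnn : ∀ T ∈ s, 0 ≤ x T) (hxle : ∑ T ∈ s, x T ≤ 1) (hU : 0 ≤ U) (hg : ∀ T ∈ s, g T ≤ U) :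
    ∑ T ∈ s, x T * g T ≤ U :=
  calc ∑ T ∈ s, x T * g T ≤ ∑ T ∈ s, x T * U :=
        sum_le_sum fun T hT => mul_le_mul_of_nonneg_left (hg T hT) (hxnn T hT)
    _ = (∑ T ∈ s, x T) * U := (sum_mul ..).symm
    _ ≤ U := mul_le_of_le_one_left hU hxle

lemma mul_sub_le_sum_range_sub {f : ℝ → ℝ} {α : ℝ} {p : ℕ → ℝ} (hα : 0 ≤ α) (hf0 : f 0 = 0)
    (hbdd : ∀ y : ℕ, BddAbove ((fun z => p y * z - f z) '' Set.Ici 0))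
    (hkey : ∀ y : ℕ,
      p y - (f ((y : ℝ) + 1) - f (y : ℝ)) ≥ (1/α) * (conj f (p (y+1)) - conj f (p y)))
    (Y : ℕ) {z : ℝ} (hz : 0 ≤ z) :
    (1/α) * (z * p Y - f z - conj f (p 0)) ≤ ∑ y ∈ range Y, p y - f Y := by
  have hfenchel : p Y * z ≤ conj f (p Y) + f z := mul_le_conj_add (hbdd Y) hz
  calc (1/α) * (z * p Y - f z - conj f (p 0))
      ≤ (1/α) * (conj f (p Y) - conj f (p 0)) := by gcongr; linarith
    _ ≤ ∑ y ∈ range Y, p y - f Y := conj_sub_conj_le_sum_range_sub hf0 hkey Y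

lemma sum_utility_ge {m n : ℕ} {α : ℝ} {p : ℕ → ℝ} (hα : 1 ≤ α) (hpmono : Monotone p)
    {v : Fin n → Finset (Fin m) → ℝ} (hv0 : ∀ i, v i ∅ = 0) {S : Fin n → Finset (Fin m)}
    (hrun : ∀ i : Fin n, ∀ T : Finset (Fin m),
      v i (S i) - ∑ j ∈ S i, p (soldCount S j i) ≥ v i T - ∑ j ∈ T, p (soldCount S j i))
    {x : Fin n → Finset (Fin m) → ℝ} (hxnn : ∀ i T, 0 ≤ x i T)
    (hxle : ∀ i, ∑ T : Finset (Fin m), x i T ≤ 1) :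
    (1/α) * ((∑ i, ∑ T, v i T * x i T) -
        ∑ j, (∑ i, ∑ T with j ∈ T, x i T) * p (soldCount S j n)) ≤
      ∑ i, (v i (S i) - ∑ j ∈ S i, p (soldCount S j i)) := by
  have hutil_nonneg : ∀ i, 0 ≤ v i (S i) - ∑ j ∈ S i, p (soldCount S j i) := fun i => by
    simpa [hv0] using hrun i ∅
  have hbuyer : ∀ i, ∑ T, x i T * (v i T - ∑ j ∈ T, p (soldCount S j n)) ≤
      v i (S i) - ∑ j ∈ S i, p (soldCount S j i) := fun i =>
    sum_mul_le_of_le _ (fun T _ => hxnn i T) (hxle i) (hutil_nonneg i) fun T _ =>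
      -- prices only rise, so buyer `i` faced prices no higher than the final ones
      (sub_le_sub_left (sum_le_sum fun j _ => hpmono (soldCount_mono S j i.isLt.le)) _).trans
        (hrun i T)
  have hswap : ∑ i, ∑ T, x i T * (v i T - ∑ j ∈ T, p (soldCount S j n)) =
      (∑ i, ∑ T, v i T * x i T) - ∑ j, (∑ i, ∑ T with j ∈ T, x i T) * p (soldCount S j n) := by
    simp_rw [mul_sub, sum_sub_distrib, sum_mul_sum_mem, mul_comm (x _ _), sum_mul]
    congr 1
    exact sum_comm
  have hα' : 1/α ≤ 1 := by rw [div_le_one (by linarith)]; exact hα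
  calc _ ≤ (1/α) * ∑ i, (v i (S i) - ∑ j ∈ S i, p (soldCount S j i)) := by
        rw [← hswap]; gcongr; exact hbuyer _
    _ ≤ _ := mul_le_of_le_one_left (sum_nonneg fun i _ => hutil_nonneg i) hα'

theorem stmt0_general (m n : ℕ) (f : ℝ → ℝ) (α : ℝ) (p : ℕ → ℝ)
    (hf0 : f 0 = 0)
    (hα : 1 ≤ α)
    (hpmono : Monotone p)
    (hbdd : ∀ y : ℕ, BddAbove ((fun z => p y * z - f z) '' Set.Ici 0))
    (hkey : ∀ y : ℕ,
      p y - (f ((y : ℝ) + 1) - f (y : ℝ)) ≥ (1/α) * (conj f (p (y+1)) - conj f (p y)))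
    (v : Fin n → Finset (Fin m) → ℝ)
    (hv0 : ∀ i, v i ∅ = 0)
    (S : Fin n → Finset (Fin m))
    (hrun : ∀ i : Fin n, ∀ T : Finset (Fin m),
      v i (S i) - ∑ j ∈ S i, p (soldCount S j i) ≥
        v i T - ∑ j ∈ T, p (soldCount S j i))
    (x : Fin n → Finset (Fin m) → ℝ)
    (hxnn : ∀ i T, 0 ≤ x i T)
    (hxle : ∀ i, ∑ T : Finset (Fin m), x i T ≤ 1) :
    (∑ i, v i (S i)) - ∑ j, f (soldCount S j n) ≥
      (1/α) * ((∑ i, ∑ T : Finset (Fin m), v i T * x i T) -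
          ∑ j, f (∑ i, ∑ T ∈ Finset.univ.filter (fun T : Finset (Fin m) => j ∈ T), x i T))
        - ((m : ℝ)/α) * conj f (p 0) := by
  have hbuyers := sum_utility_ge hα hpmono hv0 hrun hxnn hxle
  have hrevenue := sum_sum_mem_soldCount S p
  have hitems : ∑ j, (1/α) * ((∑ i, ∑ T with j ∈ T, x i T) * p (soldCount S j n) -
        f (∑ i, ∑ T with j ∈ T, x i T) - conj f (p 0)) ≤
      ∑ j, (∑ y ∈ range (soldCount S j n), p y - f (soldCount S j n)) :=
    sum_le_sum fun j _ => mul_sub_le_sum_range_sub (by linarith) hf0 hbdd hkey _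
      (sum_nonneg fun i _ => sum_nonneg fun T _ => hxnn i T)
  simp only [← mul_sum, sum_sub_distrib, sum_const, card_univ, Fintype.card_fin,
    nsmul_eq_mul] at hbuyers hitems
  linarith [show (m : ℝ) / α * conj f (p 0) = 1/α * (m * conj f (p 0)) by ring]

/-- if a nondecreasing pricing function `p` satisfies the key discrete
differential inequality for a convex, nondecreasing production cost `f` with `f(0)=0`,
then every run of the posted-price mechanism `M_p` is `α`-competitive against every
fractional allocation, up to the additive constant `(m/α)·f*(p 0)`. -/
theorem stmt0 (m n : ℕ) (f : ℝ → ℝ) (α : ℝ) (p : ℕ → ℝ)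
    (hf0 : f 0 = 0)
    (hfnn : ∀ y ≥ (0:ℝ), 0 ≤ f y)
    (hfconv : ConvexOn ℝ (Set.Ici 0) f)
    (hfmono : MonotoneOn f (Set.Ici 0))
    (hα : 1 ≤ α)
    (hpnn : ∀ y : ℕ, 0 ≤ p y)
    (hpmono : Monotone p)
    (hbdd : ∀ y : ℕ, BddAbove ((fun z => p y * z - f z) '' Set.Ici 0))
    (hkey : ∀ y : ℕ,
      p y - (f ((y : ℝ) + 1) - f (y : ℝ)) ≥ (1/α) * (conj f (p (y+1)) - conj f (p y)))
    (v : Fin n → Finset (Fin m) → ℝ)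
    (hv0 : ∀ i, v i ∅ = 0)
    (hvnn : ∀ i T, 0 ≤ v i T)
    (S : Fin n → Finset (Fin m))
    (hrun : ∀ i : Fin n, ∀ T : Finset (Fin m),
      v i (S i) - ∑ j ∈ S i, p (soldCount S j i) ≥
        v i T - ∑ j ∈ T, p (soldCount S j i))
    (x : Fin n → Finset (Fin m) → ℝ)
    (hxnn : ∀ i T, 0 ≤ x i T)
    (hxle : ∀ i, ∑ T : Finset (Fin m), x i T ≤ 1) :
    (∑ i, v i (S i)) - ∑ j, f (soldCount S j n) ≥
      (1/α) * ((∑ i, ∑ T : Finset (Fin m), v i T * x i T) -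
          ∑ j, f (∑ i, ∑ T ∈ Finset.univ.filter (fun T : Finset (Fin m) => j ∈ T), x i T))
        - ((m : ℝ)/α) * conj f (p 0) :=
  stmt0_general m n f α p hf0 hα hpmono hbdd hkey v hv0 S hrun x hxnn hxle
end

section
/- Let a > 0 and γ ≥ 1 be reals, let f(y) = a·y^{γ+1} for y ≥ 0, let p(y) = a·(γ+1)²·y^γ, and let α = (γ+1)^{(γ+1)/γ}. Then for every y ≥ 0: ∫₀^y p(t) dt − f(y) ≥ (1/α)·sup_{z ≥ 0} (p(y)·z − f(z)); in fact equality holds for every y ≥ 0. -/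
open Real

lemma sup_eq (a γ : ℝ) (ha : 0 < a) (hγ : 1 ≤ γ) (y : ℝ) (hy : 0 ≤ y) :
    sSup ((fun z => (a * (γ+1)^2 * y ^ γ) * z - a * z ^ (γ+1)) '' Set.Ici 0)
      = a * γ * (γ+1) ^ ((γ+1)/γ) * y ^ (γ+1) := by
  have hγ0 : 0 < γ := lt_of_lt_of_le one_pos hγ
  have hb : (0:ℝ) < γ + 1 := by linarith
  rcases eq_or_lt_of_le hy with h0 | hy'
  · -- y = 0
    have hy0 : y = 0 := h0.symm
    subst hy0
    rw [Real.zero_rpow hγ0.ne', Real.zero_rpow hb.ne']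
    apply IsGreatest.csSup_eq
    constructor
    · exact ⟨0, Set.self_mem_Ici, by
        simp [Real.zero_rpow hb.ne']⟩
    · rintro w ⟨z, hz, rfl⟩
      simp only [Set.mem_Ici] at hz
      have : 0 ≤ a * z ^ (γ+1) := by positivity
      simp only []
      nlinarith
  · set c : ℝ := (γ+1) ^ (1/γ) with hcdef
    have hcpos : 0 < c := Real.rpow_pos_of_pos hb _
    have hc : c ^ γ = γ + 1 := by
      rw [hcdef, ← Real.rpow_mul hb.le]
      rw [one_div_mul_cancel hγ0.ne', Real.rpow_one]
    have hc1 : c ^ (γ+1) = (γ+1) ^ ((γ+1)/γ) := by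
      rw [hcdef, ← Real.rpow_mul hb.le]
      congr 1; field_simp
    have hc2 : c ^ (γ+1) = (γ+1) * c := by
      rw [Real.rpow_add_one hcpos.ne', hc]
    have hyg : y ^ (γ+1) = y ^ γ * y := by
      rw [Real.rpow_add_one hy'.ne']
    apply IsGreatest.csSup_eq
    constructor
    · refine ⟨c * y, Set.mem_Ici.mpr (by positivity), ?_⟩
      show a * (γ+1)^2 * y ^ γ * (c * y) - a * (c * y) ^ (γ+1)
          = a * γ * (γ+1) ^ ((γ+1)/γ) * y ^ (γ+1)
      rw [Real.mul_rpow hcpos.le hy, ← hc1, hc2, hyg]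
      ring
    · rintro w ⟨z, hz, rfl⟩
      simp only [Set.mem_Ici] at hz
      show a * (γ+1)^2 * y ^ γ * z - a * z ^ (γ+1)
          ≤ a * γ * (γ+1) ^ ((γ+1)/γ) * y ^ (γ+1)
      set s : ℝ := z / (c * y) with hsdef
      have hs : 0 ≤ s := by positivity
      have hzs : z = s * (c * y) := by
        rw [hsdef]; field_simp
      have hB : 1 + (γ+1) * (s - 1) ≤ s ^ (γ+1) := by
        have := one_add_mul_self_le_rpow_one_add (s := s - 1) (by linarith) (p := γ+1) (by linarith)
        simpa using this
      have key : (γ+1) * s - s ^ (γ+1) ≤ γ := by linarith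
      have hzpow : z ^ (γ+1) = s ^ (γ+1) * (c ^ (γ+1) * y ^ (γ+1)) := by
        rw [hzs, Real.mul_rpow hs (by positivity), Real.mul_rpow hcpos.le hy]
      rw [hzpow, ← hc1, hc2, hyg, hzs]
      have hpos : 0 ≤ a * (γ+1) * c * (y ^ γ * y) := by
        have : 0 ≤ y ^ γ * y := by positivity
        positivity
      nlinarith [mul_le_mul_of_nonneg_left key hpos]

lemma int_eq (a γ : ℝ) (hγ : 1 ≤ γ) (y : ℝ) :
    (∫ t in (0:ℝ)..y, a * (γ+1)^2 * t ^ γ) = a * (γ+1) * y ^ (γ+1) := by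
  have hγ0 : 0 < γ := lt_of_lt_of_le one_pos hγ
  have hb : (0:ℝ) < γ + 1 := by linarith
  rw [intervalIntegral.integral_const_mul, integral_rpow (Or.inl (by linarith)),
    Real.zero_rpow hb.ne']
  field_simp
  ring

/-- for the power production cost `f(y) = a·y^(γ+1)` with `a > 0` and
`γ ≥ 1`, the pricing function `p(y) = a·(γ+1)²·y^γ` satisfies the feasibility condition
`∫₀^y p − f(y) ≥ (1/α)·f*(p(y))` with `α = (γ+1)^((γ+1)/γ)` and additive constant `0`;
in fact the condition holds with equality for every `y ≥ 0`. -/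
theorem stmt1 (a γ : ℝ) (ha : 0 < a) (hγ : 1 ≤ γ) :
    (∀ y ≥ (0:ℝ),
      (∫ t in (0:ℝ)..y, a * (γ+1)^2 * t ^ γ) - a * y ^ (γ+1) ≥
        (1 / ((γ+1) ^ ((γ+1)/γ))) *
          sSup ((fun z => (a * (γ+1)^2 * y ^ γ) * z - a * z ^ (γ+1)) '' Set.Ici 0)) ∧
    (∀ y ≥ (0:ℝ),
      (∫ t in (0:ℝ)..y, a * (γ+1)^2 * t ^ γ) - a * y ^ (γ+1) =
        (1 / ((γ+1) ^ ((γ+1)/γ))) *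
          sSup ((fun z => (a * (γ+1)^2 * y ^ γ) * z - a * z ^ (γ+1)) '' Set.Ici 0)) := by
  have hb : (0:ℝ) < γ + 1 := by linarith
  have heq : ∀ y ≥ (0:ℝ),
      (∫ t in (0:ℝ)..y, a * (γ+1)^2 * t ^ γ) - a * y ^ (γ+1) =
        (1 / ((γ+1) ^ ((γ+1)/γ))) *
          sSup ((fun z => (a * (γ+1)^2 * y ^ γ) * z - a * z ^ (γ+1)) '' Set.Ici 0) := by
    intro y hy
    rw [sup_eq a γ ha hγ y hy, int_eq a γ hγ y]
    have hα : (0:ℝ) < (γ+1) ^ ((γ+1)/γ) := Real.rpow_pos_of_pos hb _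
    field_simp
    ring
  exact ⟨fun y hy => ge_of_eq (heq y hy), heq⟩
end

section
/- Let γ ≥ 1 and K > 0 be reals. Suppose there is a sequence c : ℕ → ℝ with c₀ = K, 0 < cₙ < 1 for all n, and c_{n+1} = K / (1 − cₙ^γ) for all n. Then K ≤ γ·(γ+1)^{−(γ+1)/γ}. -/
open Real Filter

/-- The key analytic bound: for `L > 0` and `γ ≥ 1`,
`L - L^(γ+1) ≤ γ * (γ+1)^(-(γ+1)/γ)`, by Bernoulli's inequality
(tangent line at the maximizer `a = (γ+1)^(-1/γ)`). -/
lemma aux_bound (γ L : ℝ) (hγ : 1 ≤ γ) (hL : 0 < L) :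
    L - L ^ (γ + 1) ≤ γ * (γ + 1) ^ (-((γ + 1) / γ)) := by
  have hγ0 : (0:ℝ) < γ := lt_of_lt_of_le one_pos hγ
  have hγ1 : (0:ℝ) < γ + 1 := by linarith
  set a : ℝ := (γ + 1) ^ (-(1 / γ)) with ha_def
  have ha : 0 < a := rpow_pos_of_pos hγ1 _
  have haγ1 : a ^ (γ + 1) = (γ + 1) ^ (-((γ + 1) / γ)) := by
    rw [ha_def, ← Real.rpow_mul hγ1.le]
    congr 1
    field_simp
  set P : ℝ := a ^ (γ + 1) with hP_def
  have hP0 : 0 < P := rpow_pos_of_pos ha _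
  have hP : P = (γ + 1)⁻¹ * a := by
    have haγ : a ^ γ = (γ + 1)⁻¹ := by
      rw [ha_def, ← Real.rpow_mul hγ1.le]
      rw [show -(1 / γ) * γ = -1 by field_simp]
      rw [Real.rpow_neg_one]
    rw [hP_def, Real.rpow_add ha, Real.rpow_one, haγ]
  set Q : ℝ := L ^ (γ + 1) with hQ_def
  -- Bernoulli's inequality with `1 + s = L / a`, `p = γ + 1`
  have hB : 1 + (γ + 1) * (L / a - 1) ≤ (1 + (L / a - 1)) ^ (γ + 1) :=
    one_add_mul_self_le_rpow_one_add (by have := div_pos hL ha; linarith) (by linarith)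
  have hdiv : (1 + (L / a - 1)) ^ (γ + 1) = Q / P := by
    rw [show 1 + (L / a - 1) = L / a by ring, Real.div_rpow hL.le ha.le]
  rw [hdiv] at hB
  have h1 : P * (1 + (γ + 1) * (L / a - 1)) ≤ Q := by
    calc P * (1 + (γ + 1) * (L / a - 1)) ≤ P * (Q / P) :=
          mul_le_mul_of_nonneg_left hB hP0.le
      _ = Q := mul_div_cancel₀ _ hP0.ne'
  have h2 : P * (1 + (γ + 1) * (L / a - 1)) = (γ + 1)⁻¹ * a + (L - a) := by
    rw [hP]
    field_simp
  have h3 : a - (γ + 1)⁻¹ * a = γ * P := by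
    rw [hP]
    field_simp
    ring
  rw [← haγ1]
  linarith [h1, h2, h3]

/-- if `γ ≥ 1`, `K > 0`, and there is a sequence `c : ℕ → ℝ` with
`c₀ = K`, `0 < cₙ < 1` for all `n`, and `c_{n+1} = K / (1 − cₙ^γ)`, then
`K ≤ γ·(γ+1)^(−(γ+1)/γ)`. -/
theorem stmt3 (γ K : ℝ) (hγ : 1 ≤ γ) (hK : 0 < K) (c : ℕ → ℝ)
    (h0 : c 0 = K)
    (hb : ∀ n, 0 < c n ∧ c n < 1)
    (hrec : ∀ n, c (n+1) = K / (1 - (c n) ^ γ)) :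
    K ≤ γ * (γ+1) ^ (-((γ+1)/γ)) := by
  have hγ0 : (0:ℝ) < γ := lt_of_lt_of_le one_pos hγ
  -- the denominators are positive
  have hd : ∀ n, 0 < 1 - (c n) ^ γ := by
    intro n
    by_contra h
    push_neg at h
    have h1 : c (n+1) ≤ 0 := by
      rw [hrec n]
      exact div_nonpos_of_nonneg_of_nonpos hK.le h
    exact absurd h1 (not_le.mpr (hb (n+1)).1)
  have hK2 : ∀ n, c (n+1) * (1 - (c n) ^ γ) = K := by
    intro n
    rw [hrec n, div_mul_cancel₀ _ (hd n).ne']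
  -- monotonicity
  have hstep : ∀ n, c n ≤ c (n+1) := by
    intro n
    induction n with
    | zero =>
      have h01 : (1:ℝ) - (c 0) ^ γ ≤ 1 := by
        have : 0 ≤ (c 0) ^ γ := Real.rpow_nonneg (hb 0).1.le γ
        linarith
      rw [hrec 0, le_div_iff₀ (hd 0)]
      nlinarith [(hb 0).1, h0]
    | succ n ih =>
      have hpow : (c n) ^ γ ≤ (c (n+1)) ^ γ :=
        Real.rpow_le_rpow (hb n).1.le ih hγ0.le
      calc c (n+1) = K / (1 - (c n) ^ γ) := hrec n
        _ ≤ K / (1 - (c (n+1)) ^ γ) := by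
            have h := hd (n+1)
            gcongr
        _ = c (n+2) := (hrec (n+1)).symm
  have hmono : Monotone c := monotone_nat_of_le_succ hstep
  have hbdd : BddAbove (Set.range c) := ⟨1, by
    rintro x ⟨n, rfl⟩
    exact (hb n).2.le⟩
  set L : ℝ := ⨆ n, c n with hL_def
  have hLt : Tendsto c atTop (nhds L) := tendsto_atTop_ciSup hmono hbdd
  have hL0 : 0 < L := lt_of_lt_of_le (hb 0).1 (le_ciSup hbdd 0)
  -- pass to the limit in the recursion
  have h1 : Tendsto (fun n => c (n+1)) atTop (nhds L) :=
    hLt.comp (tendsto_add_atTop_nat 1)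
  have h2 : Tendsto (fun n => (c n) ^ γ) atTop (nhds (L ^ γ)) :=
    hLt.rpow_const (Or.inl hL0.ne')
  have h3 : Tendsto (fun n => c (n+1) * (1 - (c n) ^ γ)) atTop
      (nhds (L * (1 - L ^ γ))) :=
    h1.mul (tendsto_const_nhds.sub h2)
  have h4 : (fun n => c (n+1) * (1 - (c n) ^ γ)) = fun _ => K := funext hK2
  rw [h4] at h3
  have hKL : K = L * (1 - L ^ γ) := tendsto_nhds_unique tendsto_const_nhds h3
  have hLL : L * (1 - L ^ γ) = L - L ^ (γ + 1) := by
    rw [Real.rpow_add hL0, Real.rpow_one]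
    ring
  rw [hKL, hLL]
  exact aux_bound γ L hγ hL0
end

section
/- Let γ ≥ 1 and α > 0 be reals. Suppose p : [0,∞) → [0,∞) is differentiable and nondecreasing with p(y) ≥ y^γ for all y ≥ 0, and p satisfies the differential equation p(y) − y^γ = (1/α)·p(y)^{1/γ}·p′(y) for all y ≥ 0. Then α ≥ (γ+1)^{(γ+1)/γ}. -/
/-!
Suppose α < (γ+1)^((γ+1)/γ). By Young's inequality, y·(p − y^γ) ≤ γ·(p/(γ+1))^((γ+1)/γ)
(the convex conjugate of y ↦ y^(γ+1) evaluated at p), so the equation gives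
p′/p ≤ c/y with c = γα/(γ+1)^((γ+1)/γ) < γ. Integrating, p(y) ≤ p(1)·y^c for y ≥ 1,
which contradicts p(y) ≥ y^γ as y → ∞.
-/

open Real Filter Set

theorem mul_sub_rpow_add_one_le {γ y P : ℝ} (hγ : 0 < γ) (hy : 0 ≤ y) (hP : 0 ≤ P) :
    y * P - y ^ (γ + 1) ≤ γ * (P / (γ + 1)) ^ ((γ + 1) / γ) := by
  have hγ1 : 0 < γ + 1 := by linarith
  have hconj : (γ + 1).HolderConjugate ((γ + 1) / γ) :=
    (holderConjugate_iff_eq_conjExponent (by linarith)).2 (by ring_nf)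
  have young := young_inequality_of_nonneg hy (div_nonneg hP hγ1.le) hconj
  rw [div_div_eq_mul_div] at young
  have hscaled :
      y * P / (γ + 1) ≤ (y ^ (γ + 1) + γ * (P / (γ + 1)) ^ ((γ + 1) / γ)) / (γ + 1) := by
    convert young using 1 <;> ring
  rw [div_le_div_iff_of_pos_right hγ1] at hscaled
  linarith

theorem le_mul_div_of_sub_rpow_eq {γ α y P D : ℝ} (hγ : 0 < γ) (hα : 0 < α) (hy : 0 < y)
    (hP : 0 < P) (heq : P - y ^ γ = 1 / α * P ^ (1 / γ) * D) :
    D ≤ γ * α / (γ + 1) ^ ((γ + 1) / γ) * P / y := by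
  set A := (γ + 1) ^ ((γ + 1) / γ)
  have hA : 0 < A := by positivity
  have hq : 0 < P ^ (1 / γ) := by positivity
  have hPpow : P ^ ((γ + 1) / γ) = P * P ^ (1 / γ) := by
    rw [add_div, div_self hγ.ne', rpow_add hP, rpow_one]
  have hyoung := mul_sub_rpow_add_one_le hγ hy.le hP.le
  rw [rpow_add hy, rpow_one, div_rpow hP.le (by linarith), hPpow, mul_div_assoc',
    le_div_iff₀ hA] at hyoung
  have hD : D = α * (P - y ^ γ) / P ^ (1 / γ) := by
    rw [heq]; field_simp
  rw [hD, div_le_div_iff₀ hq hy, div_mul_eq_mul_div, div_mul_eq_mul_div, le_div_iff₀ hA]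
  calc α * (P - y ^ γ) * y * A = α * ((y * P - y ^ γ * y) * A) := by ring
    _ ≤ α * (γ * (P * P ^ (1 / γ))) := by gcongr
    _ = γ * α * P * P ^ (1 / γ) := by ring

theorem le_mul_rpow_of_deriv_le {f : ℝ → ℝ} {c : ℝ} (hpos : ∀ y ≥ 1, 0 < f y)
    (hdiff : ∀ y ≥ 1, DifferentiableAt ℝ f y) (hderiv : ∀ y > 1, deriv f y ≤ c * f y / y)
    {y : ℝ} (hy : 1 ≤ y) : f y ≤ f 1 * y ^ c := by
  have hF : ∀ y ≥ 1, HasDerivAt (fun y ↦ log (f y) - c * log y)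
      (deriv f y / f y - c * y⁻¹) y := fun y hy ↦
    ((hdiff y hy).hasDerivAt.log (hpos y hy).ne').sub
      ((hasDerivAt_log (by linarith)).const_mul c)
  have hanti : AntitoneOn (fun y ↦ log (f y) - c * log y) (Ici 1) := by
    apply antitoneOn_of_deriv_nonpos (convex_Ici 1)
    · exact fun y hy ↦ (hF y hy).continuousAt.continuousWithinAt
    · rw [interior_Ici]
      exact fun y hy ↦ (hF y hy.le).differentiableAt.differentiableWithinAt
    · rw [interior_Ici]
      intro y (hy : 1 < y)
      rw [(hF y hy.le).deriv, sub_nonpos, div_le_iff₀ (hpos y hy.le)]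
      calc deriv f y ≤ c * f y / y := hderiv y hy
        _ = c * y⁻¹ * f y := by ring
  have hlog := hanti self_mem_Ici hy hy
  have hy0 : 0 < y := by linarith
  rw [← log_le_log_iff (hpos y hy) (mul_pos (hpos 1 le_rfl) (rpow_pos_of_pos hy0 c)),
    log_mul (hpos 1 le_rfl).ne' (rpow_pos_of_pos hy0 c).ne', log_rpow hy0]
  simp only [log_one, mul_zero, sub_zero] at hlog
  linarith

theorem le_of_rpow_le_mul_rpow {γ c C : ℝ} (h : ∀ y ≥ 1, y ^ γ ≤ C * y ^ c) : γ ≤ c := by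
  by_contra! hlt
  obtain ⟨y, hyC, hy⟩ := ((tendsto_rpow_atTop (sub_pos.2 hlt)).eventually_gt_atTop C).and
    (eventually_ge_atTop 1) |>.exists
  have hy0 : 0 < y := by linarith
  have := h y hy
  rw [← sub_add_cancel γ c, rpow_add hy0] at this
  nlinarith [rpow_pos_of_pos hy0 c]

theorem stmt4_general (γ α : ℝ) (hγ : 1 ≤ γ) (hα : 0 < α) (p : ℝ → ℝ)
    (hdiff : ∀ y ≥ (0:ℝ), DifferentiableAt ℝ p y)
    (hge : ∀ y ≥ (0:ℝ), y ^ γ ≤ p y)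
    (hode : ∀ y ≥ (0:ℝ), p y - y ^ γ = (1/α) * (p y) ^ (1/γ) * deriv p y) :
    (γ+1) ^ ((γ+1)/γ) ≤ α := by
  by_contra! hlt
  have hγ0 : 0 < γ := by linarith
  have hpos : ∀ y ≥ 1, 0 < p y := fun y hy ↦
    (rpow_pos_of_pos (by linarith) γ).trans_le (hge y (by linarith))
  have hgrowth : ∀ y ≥ 1, y ^ γ ≤ p 1 * y ^ (γ * α / (γ + 1) ^ ((γ + 1) / γ)) :=
    fun y hy ↦ (hge y (by linarith)).trans <|
      le_mul_rpow_of_deriv_le hpos (fun y hy ↦ hdiff y (by linarith))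
        (fun y hy ↦ le_mul_div_of_sub_rpow_eq hγ0 hα (by linarith) (hpos y hy.le)
          (hode y (by linarith))) hy
  have hγc := le_of_rpow_le_mul_rpow hgrowth
  rw [le_div_iff₀ (by positivity)] at hγc
  linarith [mul_lt_mul_of_pos_left hlt hγ0]

/-- if a differentiable, nondecreasing `p : [0,∞) → [0,∞)` with
`p(y) ≥ y^γ` satisfies the differential equation
`p(y) − y^γ = (1/α)·p(y)^(1/γ)·p′(y)` for all `y ≥ 0`, then
`α ≥ (γ+1)^((γ+1)/γ)`. -/
theorem stmt4 (γ α : ℝ) (hγ : 1 ≤ γ) (hα : 0 < α) (p : ℝ → ℝ)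
    (hdiff : ∀ y ≥ (0:ℝ), DifferentiableAt ℝ p y)
    (hmono : MonotoneOn p (Set.Ici 0))
    (hnn : ∀ y ≥ (0:ℝ), 0 ≤ p y)
    (hge : ∀ y ≥ (0:ℝ), y ^ γ ≤ p y)
    (hode : ∀ y ≥ (0:ℝ), p y - y ^ γ = (1/α) * (p y) ^ (1/γ) * deriv p y) :
    (γ+1) ^ ((γ+1)/γ) ≤ α :=
  stmt4_general γ α hγ hα p hdiff hge hode
end

section
/- Let f : [0,∞) → [0,∞) be differentiable with f(0) = 0, and suppose its derivative f′ is concave, differentiable, and strictly increasing. Then for every y ≥ 0: ∫₀^y f′(2t) dt − f(y) ≥ (1/4)·sup_{z ≥ 0} (f′(2y)·z − f(z)). Equivalently, (3/4)·f(2y) − f(y) ≥ (y/2)·f′(2y) for all y ≥ 0. -/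
/-!
Since `f'` is increasing, `f` is convex, so the supremum defining `f*(f'(2y))` is attained at
`z = 2y`, where it equals `2y f'(2y) - f(2y)`. As `∫₀^y f'(2t) dt = f(2y)/2`, both claims reduce
to `(3/4) f(2y) - f(y) ≥ (y/2) f'(2y)`. For this, compare the concave `f'` with its secant
line `ℓ` through `y` and `2y`: `ℓ ≤ f'` on `[y, 2y]` and `f' ≤ ℓ` on `[0, y]`. Integrating gives
`f(2y) - f(y) ≥ y (f'(y) + f'(2y)) / 2` and `f(y) ≤ y (3 f'(y) - f'(2y)) / 2`, and `3/4` of the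
first minus `1/4` of the second is the claim.
-/

open Set intervalIntegral
open MeasureTheory (volume)

section

variable {s : Set ℝ} {f f' g : ℝ → ℝ} {a b p q x y z t : ℝ}

theorem ConcaveOn.le_secant_of_le (hg : ConcaveOn ℝ s g) (hx : x ∈ s) (hy : y ∈ s) (ht : t ∈ s)
    (hxy : x < y) (htx : t ≤ x) :
    g t ≤ g x + slope g x y * (t - x) := by
  rcases htx.eq_or_lt with rfl | htx
  · simp
  have hslope := hg.slope_anti hx ⟨ht, htx.ne⟩ ⟨hy, hxy.ne'⟩ (htx.trans hxy).le
  have := mul_le_mul_of_nonpos_right hslope (sub_nonpos.2 htx.le)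
  rw [slope_def_field g x t, div_mul_cancel₀ _ (sub_ne_zero.2 htx.ne)] at this
  linarith

theorem ConcaveOn.secant_le_of_mem_Icc (hg : ConcaveOn ℝ s g) (hx : x ∈ s) (hy : y ∈ s)
    (ht : t ∈ Icc x y) :
    g x + slope g x y * (t - x) ≤ g t := by
  rcases ht.1.eq_or_lt with rfl | hxt
  · simp
  have hts : t ∈ s := hg.1.ordConnected.out hx hy ht
  have hslope := hg.slope_anti hx ⟨hts, hxt.ne'⟩ ⟨hy, (hxt.trans_le ht.2).ne'⟩ ht.2
  have := mul_le_mul_of_nonneg_right hslope (sub_nonneg.2 hxt.le)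
  rw [slope_def_field g x t, div_mul_cancel₀ _ (sub_ne_zero.2 hxt.ne')] at this
  linarith

theorem integral_const_add_mul_sub (c m x a b : ℝ) :
    ∫ t in a..b, (c + m * (t - x)) = c * (b - a) + m * ((b - x) ^ 2 - (a - x) ^ 2) / 2 := by
  rw [integral_add intervalIntegrable_const
      ((by fun_prop : Continuous fun t : ℝ => m * (t - x)).intervalIntegrable _ _),
    integral_const, integral_const_mul, integral_comp_sub_right (fun t => t), integral_id,
    smul_eq_mul]
  ring

theorem MonotoneOn.intervalIntegrable_of_Icc_subset (hg : MonotoneOn g s) (hab : a ≤ b)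
    (hs : Icc a b ⊆ s) :
    IntervalIntegrable g volume a b :=
  (hg.mono (by rwa [uIcc_of_le hab])).intervalIntegrable

theorem trapezoid_le_sub_of_concaveOn (hab : a ≤ b) (hf : ContinuousOn f (Icc a b))
    (hd : ∀ t ∈ Ioo a b, HasDerivAt f (f' t) t) (hint : IntervalIntegrable f' volume a b)
    (hconc : ConcaveOn ℝ (Icc a b) f') :
    (b - a) * (f' a + f' b) / 2 ≤ f b - f a := by
  have hchord : (b - a) * slope f' a b = f' b - f' a := sub_smul_slope f' a b
  have hle := integral_mono_on hab
    ((by fun_prop : Continuous fun t : ℝ => f' a + slope f' a b * (t - a)).intervalIntegrable _ _)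
    hint fun t ht => hconc.secant_le_of_mem_Icc (left_mem_Icc.2 hab) (right_mem_Icc.2 hab) ht
  rw [integral_const_add_mul_sub, integral_eq_sub_of_hasDerivAt_of_le hab hf hd hint] at hle
  linear_combination hle - (b - a) / 2 * hchord

theorem sub_le_secant_extrapolation_of_concaveOn (hax : a ≤ x) (hxb : x < b)
    (hf : ContinuousOn f (Icc a x))
    (hd : ∀ t ∈ Ioo a x, HasDerivAt f (f' t) t) (hint : IntervalIntegrable f' volume a x)
    (hconc : ConcaveOn ℝ (Icc a b) f') :
    f x - f a ≤ (x - a) * (f' x - slope f' x b * (x - a) / 2) := by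
  have hle := integral_mono_on hax hint
    ((by fun_prop : Continuous fun t : ℝ => f' x + slope f' x b * (t - x)).intervalIntegrable _ _)
    fun t ht => hconc.le_secant_of_le ⟨hax, hxb.le⟩ ⟨hax.trans hxb.le, le_rfl⟩
      ⟨ht.1, ht.2.trans hxb.le⟩ hxb ht.2
  rw [integral_const_add_mul_sub, integral_eq_sub_of_hasDerivAt_of_le hax hf hd hint] at hle
  linear_combination hle

theorem MonotoneOn.convexOn_of_hasDerivAt (hmono : MonotoneOn f' (interior s))
    (hs : Convex ℝ s) (hf : ContinuousOn f s) (hd : ∀ x ∈ interior s, HasDerivAt f (f' x) x) :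
    ConvexOn ℝ s f :=
  (hmono.congr fun x hx => (hd x hx).deriv.symm).convexOn_of_deriv hs hf
    fun x hx => (hd x hx).differentiableAt.differentiableWithinAt

theorem ConvexOn.add_mul_sub_le_of_hasDerivWithinAt (hconv : ConvexOn ℝ s f) (hp : p ∈ s)
    (hz : z ∈ s) (hd : HasDerivWithinAt f q s p) :
    f p + q * (z - p) ≤ f z := by
  rcases lt_trichotomy p z with hpz | rfl | hzp
  · have := mul_le_mul_of_nonneg_right (hconv.le_slope_of_hasDerivWithinAt hp hz hpz hd)
      (sub_nonneg.2 hpz.le)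
    have hchord : (z - p) * slope f p z = f z - f p := sub_smul_slope f p z
    linarith
  · simp
  · have := mul_le_mul_of_nonneg_right (hconv.slope_le_of_hasDerivWithinAt hz hp hzp hd)
      (sub_nonneg.2 hzp.le)
    have hchord : (p - z) * slope f z p = f p - f z := sub_smul_slope f z p
    linarith

theorem ConvexOn.sSup_image_mul_sub_le (hconv : ConvexOn ℝ s f) (hp : p ∈ s)
    (hd : HasDerivWithinAt f q s p) :
    sSup ((fun z => q * z - f z) '' s) ≤ q * p - f p := by
  refine csSup_le ((nonempty_of_mem hp).image _) ?_
  rintro _ ⟨z, hz, rfl⟩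
  linarith [hconv.add_mul_sub_le_of_hasDerivWithinAt hp hz hd]

theorem half_mul_deriv_two_mul_le (hf0 : f 0 = 0) (hf : ContinuousOn f (Ici 0))
    (hd : ∀ x ∈ Ioi 0, HasDerivAt f (f' x) x)
    (hmono : MonotoneOn f' (Ici 0)) (hconc : ConcaveOn ℝ (Ici 0) f') (hy : 0 ≤ y) :
    y / 2 * f' (2 * y) ≤ 3 / 4 * f (2 * y) - f y := by
  rcases hy.eq_or_lt with rfl | hy
  · simp [hf0]
  have hy2 : y < 2 * y := by linarith
  have hIcc_y : Icc y (2 * y) ⊆ Ici 0 := fun t ht => hy.le.trans ht.1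
  have hlow := trapezoid_le_sub_of_concaveOn hy2.le (hf.mono hIcc_y)
    (fun t ht => hd t (hy.trans ht.1)) (hmono.intervalIntegrable_of_Icc_subset hy2.le hIcc_y)
    (hconc.subset hIcc_y (convex_Icc _ _))
  have hup := sub_le_secant_extrapolation_of_concaveOn hy.le hy2 (hf.mono Icc_subset_Ici_self)
    (fun t ht => hd t ht.1) (hmono.intervalIntegrable_of_Icc_subset hy.le Icc_subset_Ici_self)
    (hconc.subset Icc_subset_Ici_self (convex_Icc _ _))
  have hchord : (2 * y - y) * slope f' y (2 * y) = f' (2 * y) - f' y :=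
    sub_smul_slope f' y (2 * y)
  rw [hf0, sub_zero, sub_zero] at hup
  linear_combination 3 / 4 * hlow + 1 / 4 * hup - y / 8 * hchord

end

theorem stmt5_general (f f' : ℝ → ℝ)
    (hf0 : f 0 = 0)
    (hderiv : ∀ y ≥ (0:ℝ), HasDerivWithinAt f (f' y) (Set.Ici 0) y)
    (h'conc : ConcaveOn ℝ (Set.Ici 0) f')
    (h'mono : StrictMonoOn f' (Set.Ici 0)) :
    ∀ y ≥ (0:ℝ),
      ((∫ t in (0:ℝ)..y, f' (2*t)) - f y ≥
        (1/4) * sSup ((fun z => f' (2*y) * z - f z) '' Set.Ici 0)) ∧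
      ((3/4) * f (2*y) - f y ≥ (y/2) * f' (2*y)) := by
  intro y hy
  have hy2 : (0:ℝ) ≤ 2 * y := by linarith
  have hf : ContinuousOn f (Ici 0) := fun x hx => (hderiv x hx).continuousWithinAt
  have hd : ∀ x ∈ Ioi 0, HasDerivAt f (f' x) x := fun x hx =>
    (hderiv x (le_of_lt hx)).hasDerivAt (Ici_mem_nhds hx)
  have hmono : MonotoneOn f' (Ici 0) := h'mono.monotoneOn
  have hkey := half_mul_deriv_two_mul_le hf0 hf hd hmono h'conc hy
  refine ⟨?_, hkey⟩
  have hint : ∫ t in (0:ℝ)..y, f' (2 * t) = f (2 * y) / 2 := by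
    rw [integral_comp_mul_left _ two_ne_zero, mul_zero,
      integral_eq_sub_of_hasDerivAt_of_le hy2 (hf.mono Icc_subset_Ici_self)
        (fun x hx => hd x hx.1)
        (hmono.intervalIntegrable_of_Icc_subset hy2 Icc_subset_Ici_self),
      hf0, smul_eq_mul]
    ring
  have hconv : ConvexOn ℝ (Ici 0) f :=
    (hmono.mono interior_subset).convexOn_of_hasDerivAt (convex_Ici 0) hf
      (by rw [interior_Ici]; exact hd)
  have hsup := hconv.sSup_image_mul_sub_le hy2 (hderiv _ hy2)
  rw [hint]
  linarith

/-- for a production cost `f : [0,∞) → [0,∞)` with `f(0) = 0` whose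
derivative `f'` is concave, differentiable, and strictly increasing, the pricing
function `p(y) = f'(2y)` is feasible with `α = 4` and `β = 0`:
`∫₀^y f'(2t) dt − f(y) ≥ (1/4)·sup_{z ≥ 0}(f'(2y)·z − f(z))` for all `y ≥ 0`;
equivalently, `(3/4)·f(2y) − f(y) ≥ (y/2)·f'(2y)`. -/
theorem stmt5 (f f' : ℝ → ℝ)
    (hf0 : f 0 = 0)
    (hfnn : ∀ y ≥ (0:ℝ), 0 ≤ f y)
    (hderiv : ∀ y ≥ (0:ℝ), HasDerivWithinAt f (f' y) (Set.Ici 0) y)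
    (h'conc : ConcaveOn ℝ (Set.Ici 0) f')
    (h'diff : DifferentiableOn ℝ f' (Set.Ici 0))
    (h'mono : StrictMonoOn f' (Set.Ici 0)) :
    ∀ y ≥ (0:ℝ),
      ((∫ t in (0:ℝ)..y, f' (2*t)) - f y ≥
        (1/4) * sSup ((fun z => f' (2*y) * z - f z) '' Set.Ici 0)) ∧
      ((3/4) * f (2*y) - f y ≥ (y/2) * f' (2*y)) :=
  stmt5_general f f' hf0 hderiv h'conc h'mono
end

section
/- Let f : [0,∞) → [0,∞) be twice differentiable with f(0) = 0 and f′ strictly increasing, let λ > 1, and let Γ ≥ 1 be a real number such that Γ ≥ (λ−1)·y·f″(λy) / (f′(λy) − f′(y)) for every y > 0. Then for every y ≥ 0: ∫₀^y f′(λt) dt − f(y) ≥ ((λ−1)/(λ²·Γ))·sup_{z ≥ 0} (f′(λy)·z − f(z)). Equivalently, f(λy)/λ − f(y) ≥ ((λ−1)/(λ²·Γ))·(λy·f′(λy) − f(λy)) for all y ≥ 0. -/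
/-!
Since `f'` is increasing, `f` is convex, so the supremum defining `f*(f'(λy))` is attained at the
tangency point `z = λy` and equals `λy·f'(λy) − f(λy)`; by substitution the integral is
`f(λy)/λ`. Hence both claims reduce to nonnegativity of the gap
`G y = f(λy)/λ − f(y) − c·(λy·f'(λy) − f(λy))` with `c = (λ−1)/(λ²Γ)`. Now `G 0 = 0` and
`G' y = f'(λy) − f'(y) − c·λ²·y·f''(λy) ≥ 0` is exactly the defining bound on `Γ`.
-/

open Set

lemma ConvexOn.mul_sub_le_sub_of_hasDerivWithinAt {S : Set ℝ} {f : ℝ → ℝ} {f' x y : ℝ}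
    (hfc : ConvexOn ℝ S f) (hx : x ∈ S) (hy : y ∈ S) (hf' : HasDerivWithinAt f f' S x) :
    f' * (y - x) ≤ f y - f x := by
  rcases lt_trichotomy x y with hxy | rfl | hyx
  · have h := hfc.le_slope_of_hasDerivWithinAt hx hy hxy hf'
    rwa [slope_def_field, le_div_iff₀ (sub_pos.2 hxy)] at h
  · simp
  · have h := hfc.slope_le_of_hasDerivWithinAt hy hx hyx hf'
    rw [slope_def_field, div_le_iff₀ (sub_pos.2 hyx)] at h
    linarith

lemma ConvexOn.isGreatest_image_mul_sub_of_hasDerivWithinAt {S : Set ℝ} {f : ℝ → ℝ} {f' x : ℝ}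
    (hfc : ConvexOn ℝ S f) (hx : x ∈ S) (hf' : HasDerivWithinAt f f' S x) :
    IsGreatest ((fun z => f' * z - f z) '' S) (f' * x - f x) := by
  refine ⟨mem_image_of_mem _ hx, ?_⟩
  rintro _ ⟨z, hz, rfl⟩
  have := hfc.mul_sub_le_sub_of_hasDerivWithinAt hx hz hf'
  linarith

lemma convexOn_of_hasDerivWithinAt_of_monotoneOn {D : Set ℝ} (hD : Convex ℝ D) {f f' : ℝ → ℝ}
    (hf : ∀ x ∈ D, HasDerivWithinAt f (f' x) D x) (hf'_mono : MonotoneOn f' D) :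
    ConvexOn ℝ D f := by
  have hderiv : ∀ x ∈ interior D, HasDerivAt f (f' x) x := fun x hx =>
    (hf x (interior_subset hx)).hasDerivAt (mem_interior_iff_mem_nhds.1 hx)
  refine (hf'_mono.mono interior_subset).congr (fun x hx => (hderiv x hx).deriv.symm)
    |>.convexOn_of_deriv hD (fun x hx => (hf x hx).continuousWithinAt)
      fun x hx => (hderiv x hx).differentiableAt.differentiableWithinAt

lemma monotoneOn_Ici_of_hasDerivWithinAt_nonneg {g g' : ℝ → ℝ} {a : ℝ}
    (hg : ∀ x ≥ a, HasDerivWithinAt g (g' x) (Ici a) x) (hg' : ∀ x > a, 0 ≤ g' x) :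
    MonotoneOn g (Ici a) := by
  refine monotoneOn_of_hasDerivWithinAt_nonneg (f' := g') (convex_Ici a)
    (fun x hx => (hg x hx).continuousWithinAt) (fun x hx => ?_) (fun x hx => ?_)
  · rw [interior_Ici] at hx ⊢
    exact (hg x hx.le).mono Ioi_subset_Ici_self
  · rw [interior_Ici] at hx
    exact hg' x hx

lemma HasDerivWithinAt.comp_const_mul_Ici {g : ℝ → ℝ} {g' c t : ℝ} (hc : 0 ≤ c)
    (hg : HasDerivWithinAt g g' (Ici 0) (c * t)) :
    HasDerivWithinAt (fun t => g (c * t)) (g' * c) (Ici 0) t := by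
  refine hg.comp t ?_ fun s (hs : 0 ≤ s) => mul_nonneg hc hs
  simpa using ((hasDerivAt_id t).const_mul c).hasDerivWithinAt

lemma integral_comp_const_mul_of_hasDerivWithinAt_Ici {f f' : ℝ → ℝ} {c y : ℝ} (hc : 0 < c)
    (hy : 0 ≤ y) (hf : ∀ x ≥ 0, HasDerivWithinAt f (f' x) (Ici 0) x)
    (hf' : ContinuousOn f' (Ici 0)) :
    ∫ t in (0:ℝ)..y, f' (c * t) = (f (c * y) - f 0) / c := by
  have hcy : 0 ≤ c * y := mul_nonneg hc.le hy
  rw [intervalIntegral.integral_comp_mul_left _ hc.ne', mul_zero, smul_eq_mul,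
    intervalIntegral.integral_eq_sub_of_hasDeriv_right_of_le hcy
      (fun x hx => (hf x hx.1).continuousWithinAt.mono Icc_subset_Ici_self)
      (fun x hx => (hf x hx.1.le).mono fun s (hs : x < s) => (hx.1.trans hs).le)
      ((hf'.mono Icc_subset_Ici_self).intervalIntegrable_of_Icc hcy)]
  ring

section FeasibilityGap

variable {f f' f'' : ℝ → ℝ} {lam c : ℝ}

noncomputable def feasibilityGap (f f' : ℝ → ℝ) (lam c y : ℝ) : ℝ :=
  f (lam * y) / lam - f y - c * (lam * y * f' (lam * y) - f (lam * y))

lemma hasDerivWithinAt_feasibilityGap (hlam : 0 < lam)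
    (hf : ∀ x ≥ 0, HasDerivWithinAt f (f' x) (Ici 0) x)
    (hf' : ∀ x ≥ 0, HasDerivWithinAt f' (f'' x) (Ici 0) x) {y : ℝ} (hy : 0 ≤ y) :
    HasDerivWithinAt (feasibilityGap f f' lam c)
      (f' (lam * y) - f' y - c * (lam ^ 2 * y * f'' (lam * y))) (Ici 0) y := by
  have hlamy : 0 ≤ lam * y := mul_nonneg hlam.le hy
  have hF := (hf _ hlamy).comp_const_mul_Ici hlam.le
  have hF' := (hf' _ hlamy).comp_const_mul_Ici hlam.le
  have hid : HasDerivWithinAt (fun y => lam * y) lam (Ici 0) y := by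
    simpa using ((hasDerivAt_id y).const_mul lam).hasDerivWithinAt
  refine (((hF.div_const lam).sub (hf y hy)).sub
    (((hid.mul hF').sub hF).const_mul c)).congr_deriv ?_
  field_simp
  ring

lemma feasibilityGap_nonneg (hlam : 0 < lam) (hf0 : f 0 = 0)
    (hf : ∀ x ≥ 0, HasDerivWithinAt f (f' x) (Ici 0) x)
    (hf' : ∀ x ≥ 0, HasDerivWithinAt f' (f'' x) (Ici 0) x)
    (hgrowth : ∀ x > 0, c * (lam ^ 2 * x * f'' (lam * x)) ≤ f' (lam * x) - f' x)
    {y : ℝ} (hy : 0 ≤ y) :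
    0 ≤ feasibilityGap f f' lam c y := by
  have hmono := monotoneOn_Ici_of_hasDerivWithinAt_nonneg
    (fun x hx => hasDerivWithinAt_feasibilityGap hlam hf hf' hx)
    (fun x hx => sub_nonneg.2 (hgrowth x hx))
  simpa [feasibilityGap, hf0] using hmono self_mem_Ici hy hy

end FeasibilityGap

theorem stmt6_general (f f' f'' : ℝ → ℝ) (lam Γ : ℝ)
    (hf0 : f 0 = 0)
    (hderiv : ∀ y ≥ (0:ℝ), HasDerivWithinAt f (f' y) (Set.Ici 0) y)
    (hderiv2 : ∀ y ≥ (0:ℝ), HasDerivWithinAt f' (f'' y) (Set.Ici 0) y)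
    (h'mono : StrictMonoOn f' (Set.Ici 0))
    (hlam : 1 < lam)
    (hΓ1 : 1 ≤ Γ)
    (hΓ : ∀ y > (0:ℝ), (lam - 1) * y * f'' (lam * y) / (f' (lam * y) - f' y) ≤ Γ) :
    ∀ y ≥ (0:ℝ),
      ((∫ t in (0:ℝ)..y, f' (lam * t)) - f y ≥
        ((lam - 1)/(lam^2 * Γ)) * sSup ((fun z => f' (lam * y) * z - f z) '' Set.Ici 0)) ∧
      (f (lam * y)/lam - f y ≥
        ((lam - 1)/(lam^2 * Γ)) * (lam * y * f' (lam * y) - f (lam * y))) := by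
  intro y hy
  have hlam0 : 0 < lam := by linarith
  have hΓ0 : 0 < Γ := by linarith
  have hgrowth : ∀ x > 0,
      (lam - 1) / (lam ^ 2 * Γ) * (lam ^ 2 * x * f'' (lam * x)) ≤ f' (lam * x) - f' x := by
    intro x hx
    have hden : 0 < f' (lam * x) - f' x :=
      sub_pos.2 (h'mono hx.le (mul_nonneg hlam0.le hx.le) (by nlinarith))
    have h := hΓ x hx
    rw [div_le_iff₀ hden] at h
    rw [show (lam - 1) / (lam ^ 2 * Γ) * (lam ^ 2 * x * f'' (lam * x))
        = (lam - 1) * x * f'' (lam * x) / Γ by field_simp, div_le_iff₀ hΓ0]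
    linarith
  have hgap := feasibilityGap_nonneg hlam0 hf0 hderiv hderiv2 hgrowth hy
  unfold feasibilityGap at hgap
  have hconv := convexOn_of_hasDerivWithinAt_of_monotoneOn (convex_Ici 0) hderiv h'mono.monotoneOn
  have hlamy : (0:ℝ) ≤ lam * y := by positivity
  have hsup := (hconv.isGreatest_image_mul_sub_of_hasDerivWithinAt hlamy (hderiv _ hlamy)).csSup_eq
  have hint := integral_comp_const_mul_of_hasDerivWithinAt_Ici hlam0 hy hderiv
    (fun x hx => (hderiv2 x hx).continuousWithinAt)
  rw [hint, hsup, hf0, sub_zero, mul_comm (f' _)]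
  constructor <;> linarith

/-- for a twice differentiable production cost `f : [0,∞) → [0,∞)` with
`f(0) = 0` and strictly increasing `f'`, `λ > 1`, and `Γ ≥ 1` bounding
`(λ−1)·y·f″(λy)/(f′(λy) − f′(y))` for all `y > 0`, the pricing function
`p(y) = f'(λy)` is feasible with `α = λ²Γ/(λ−1)` and `β = 0`:
`∫₀^y f'(λt) dt − f(y) ≥ ((λ−1)/(λ²Γ))·sup_{z ≥ 0}(f'(λy)·z − f(z))` for all `y ≥ 0`;
equivalently, `f(λy)/λ − f(y) ≥ ((λ−1)/(λ²Γ))·(λy·f′(λy) − f(λy))`. -/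
theorem stmt6 (f f' f'' : ℝ → ℝ) (lam Γ : ℝ)
    (hf0 : f 0 = 0)
    (hfnn : ∀ y ≥ (0:ℝ), 0 ≤ f y)
    (hderiv : ∀ y ≥ (0:ℝ), HasDerivWithinAt f (f' y) (Set.Ici 0) y)
    (hderiv2 : ∀ y ≥ (0:ℝ), HasDerivWithinAt f' (f'' y) (Set.Ici 0) y)
    (h'mono : StrictMonoOn f' (Set.Ici 0))
    (hlam : 1 < lam)
    (hΓ1 : 1 ≤ Γ)
    (hΓ : ∀ y > (0:ℝ), (lam - 1) * y * f'' (lam * y) / (f' (lam * y) - f' y) ≤ Γ) :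
    ∀ y ≥ (0:ℝ),
      ((∫ t in (0:ℝ)..y, f' (lam * t)) - f y ≥
        ((lam - 1)/(lam^2 * Γ)) * sSup ((fun z => f' (lam * y) * z - f z) '' Set.Ici 0)) ∧
      (f (lam * y)/lam - f y ≥
        ((lam - 1)/(lam^2 * Γ)) * (lam * y * f' (lam * y) - f (lam * y))) :=
  stmt6_general f f' f'' lam Γ hf0 hderiv hderiv2 h'mono hlam hΓ1 hΓ
end

section
/- Let a > 0, γ ≥ 1, and 0 < ε ≤ 1 be reals, and let f(y) = a·y^{γ+1}. Consider the posted-price mechanism that offers item j at price a·(γ+1)²·(s + 1/ε)^γ when s units of item j have been sold so far, and let α = (1+ε)^γ·(γ+1)^{(γ+1)/γ}. Then for every run of this mechanism on any sequence of buyers and for every fractional allocation x, the welfare W of the mechanism satisfies W ≥ (1/α)·(welfare of x) − m·((1/α)·f*(f′(2/ε)) + f(1/ε − 1)). -/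
/-!
Each buyer's utility `U_i` is nonnegative (the empty bundle is available), and since prices only
rise, comparing `S_i` with any bundle `T` at the final prices `p(Y_j)` gives
`Σ_T v_i(T) x_{iT} ≤ U_i + Σ_j y_j p(Y_j)`, where `y_j` is the fractional load of item `j`.
So it suffices to show, item by item, that the revenue `Σ_{s<Y} p(s)` minus the cost `f(Y)`
is at least `(y p(Y) - f(y)) / α` minus a constant. By Young's inequality `y p(Y) - f(y)` is at
most `γ a (γ+1)^((γ+1)/γ) (Y + 1/ε)^(γ+1)`, which `1/α` turns into the potential
`Φ(b) = γ a (1+ε)^(-γ) b^(γ+1)` at `b = Y + 1/ε`. The price `a (γ+1)² b^γ` at `b = s + 1/ε` pays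
both for the marginal cost `f(b) - f(b-1) ≤ a (γ+1) b^γ` and for the increment `Φ(b+1) - Φ(b)`,
because `b + 1 ≤ (1+ε) b` once `b ≥ 1/ε`; telescoping over the `Y` sales gives the bound.
-/

open Finset

lemma rpow_add_one_add_mul_sub_le {p u w : ℝ} (hp : 0 ≤ p) (hu : 0 ≤ u) (hw : 0 < w) :
    w ^ (p + 1) + (p + 1) * w ^ p * (u - w) ≤ u ^ (p + 1) := by
  have hbern := one_add_mul_self_le_rpow_one_add
    (show -1 ≤ u / w - 1 by linarith [div_nonneg hu hw.le]) (show 1 ≤ p + 1 by linarith)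
  rw [add_sub_cancel, Real.div_rpow hu hw.le, le_div_iff₀ (by positivity)] at hbern
  calc w ^ (p + 1) + (p + 1) * w ^ p * (u - w)
      = (1 + (p + 1) * (u / w - 1)) * w ^ (p + 1) := by
        rw [Real.rpow_add_one hw.ne']; field_simp
    _ ≤ u ^ (p + 1) := hbern

lemma rpow_add_one_sub_sub_one_rpow_le {p b : ℝ} (hp : 0 ≤ p) (hb : 1 ≤ b) :
    b ^ (p + 1) - (b - 1) ^ (p + 1) ≤ (p + 1) * b ^ p := by
  nlinarith [rpow_add_one_add_mul_sub_le hp (sub_nonneg.2 hb) (by linarith : 0 < b)]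

lemma mul_sub_rpow_add_one_le_s7 {a p c z : ℝ} (ha : 0 ≤ a) (hp : 0 ≤ p) (hc : 0 < c)
    (hz : 0 ≤ z) : a * (p + 1) * c ^ p * z - a * z ^ (p + 1) ≤ p * a * c ^ (p + 1) := by
  have htangent := mul_le_mul_of_nonneg_left (rpow_add_one_add_mul_sub_le hp hz hc) ha
  rw [Real.rpow_add_one hc.ne'] at htangent ⊢
  linarith

lemma conj_mul_rpow_add_one {a p c : ℝ} (ha : 0 ≤ a) (hp : 0 ≤ p) (hc : 0 < c) :
    conj (fun z => a * z ^ (p + 1)) (a * (p + 1) * c ^ p) = p * a * c ^ (p + 1) := by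
  refine IsGreatest.csSup_eq ⟨⟨c, Set.mem_Ici.2 hc.le, ?_⟩, ?_⟩
  · simp only [Real.rpow_add_one hc.ne']
    ring
  · rintro _ ⟨z, hz, rfl⟩
    exact mul_sub_rpow_add_one_le_s7 ha hp hc hz

lemma mul_sub_rpow_add_one_le_young {a p B y : ℝ} (ha : 0 ≤ a) (hp : 0 < p) (hB : 0 < B)
    (hy : 0 ≤ y) :
    y * (a * (p + 1) ^ 2 * B ^ p) - a * y ^ (p + 1) ≤
      p * a * (p + 1) ^ ((p + 1) / p) * B ^ (p + 1) := by
  -- the tangent point `c` with `(p+1) c^p = (p+1)^2 B^p`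
  set c := (p + 1) ^ (1 / p) * B
  have hp1 : 0 < p + 1 := by linarith
  have hcp : c ^ p = (p + 1) * B ^ p := by
    rw [Real.mul_rpow (by positivity) hB.le, ← Real.rpow_mul hp1.le, one_div_mul_cancel hp.ne',
      Real.rpow_one]
  have hcp1 : c ^ (p + 1) = (p + 1) ^ ((p + 1) / p) * B ^ (p + 1) := by
    rw [Real.mul_rpow (by positivity) hB.le, ← Real.rpow_mul hp1.le, one_div_mul_eq_div]
  have := mul_sub_rpow_add_one_le_s7 ha hp.le (by positivity : 0 < c) hy
  rw [hcp, hcp1] at this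
  linarith

lemma add_one_rpow_div_le_two_rpow {p : ℝ} (hp : 1 ≤ p) :
    (p + 1) ^ ((p + 1) / p) ≤ 2 ^ (p + 1) := by
  have hbern : p + 1 ≤ 2 ^ p := by
    have := one_add_mul_self_le_rpow_one_add (s := 1) (by norm_num) hp
    norm_num at this
    linarith
  calc (p + 1) ^ ((p + 1) / p) ≤ (2 ^ p) ^ ((p + 1) / p) :=
        Real.rpow_le_rpow (by linarith) hbern (by positivity)
    _ = 2 ^ (p + 1) := by
        rw [← Real.rpow_mul (by norm_num), mul_div_cancel₀ _ (by linarith : p ≠ 0)]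

section soldCount

variable {m n : ℕ} (S : Fin n → Finset (Fin m)) (j : Fin m)

lemma soldCount_eq_card : soldCount S j n = #(univ.filter fun i => j ∈ S i) := by
  simp [soldCount]

lemma sum_filter_mem_soldCount_s7 (g : ℕ → ℝ) :
    ∑ i ∈ univ.filter (fun i => j ∈ S i), g (soldCount S j i) =
      ∑ s ∈ range (soldCount S j n), g s := by
  set buyers := univ.filter fun i : Fin n => j ∈ S i
  have hinj : Set.InjOn (fun i : Fin n => soldCount S j i) buyers := by
    intro i₁ h₁ i₂ h₂ heq
    simp only [buyers, coe_filter, mem_univ, true_and] at h₁ h₂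
    by_contra hne
    rcases Fin.lt_or_lt_of_ne hne with h | h
    · exact (soldCount_lt_soldCount S j h h₁).ne heq
    · exact (soldCount_lt_soldCount S j h h₂).ne heq.symm
  have himage : buyers.image (fun i : Fin n => soldCount S j i) = range (soldCount S j n) := by
    refine eq_of_subset_of_card_le (fun s hs => ?_) ?_
    · obtain ⟨i, hi, rfl⟩ := mem_image.1 hs
      exact mem_range.2 (soldCount_lt_soldCount S j i.isLt (mem_filter.1 hi).2)
    · rw [card_range, card_image_of_injOn hinj, soldCount_eq_card]
  rw [← himage, sum_image hinj]

lemma sum_sum_soldCount_eq (g : ℕ → ℝ) :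
    ∑ i, ∑ j ∈ S i, g (soldCount S j i) = ∑ j, ∑ s ∈ range (soldCount S j n), g s := by
  rw [sum_comm' (t' := univ) (s' := fun j => univ.filter fun i => j ∈ S i) (by simp)]
  exact sum_congr rfl fun j _ => sum_filter_mem_soldCount_s7 S j g

end soldCount

lemma sum_sum_mul_sum_mem_eq {ι α : Type*} [Fintype ι] [Fintype α] [DecidableEq α]
    (x : ι → Finset α → ℝ) (q : α → ℝ) :
    ∑ i, ∑ T, x i T * ∑ j ∈ T, q j =
      ∑ j, (∑ i, ∑ T ∈ univ.filter (fun T => j ∈ T), x i T) * q j := by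
  simp_rw [sum_mul]
  conv_rhs => rw [sum_comm]
  refine sum_congr rfl fun i _ => ?_
  simp_rw [mul_sum]
  exact sum_comm' (by simp)

section mechanism

variable {m n : ℕ} {v : Fin n → Finset (Fin m) → ℝ} {S : Fin n → Finset (Fin m)} {p : ℕ → ℝ}
  {x : Fin n → Finset (Fin m) → ℝ}

lemma sum_value_mul_le (hp : Monotone p) {i : Fin n}
    (hU : 0 ≤ v i (S i) - ∑ j ∈ S i, p (soldCount S j i))
    (hrun : ∀ T : Finset (Fin m),
      v i (S i) - ∑ j ∈ S i, p (soldCount S j i) ≥ v i T - ∑ j ∈ T, p (soldCount S j i))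
    (hxnn : ∀ T, 0 ≤ x i T) (hxle : ∑ T, x i T ≤ 1) :
    ∑ T, v i T * x i T ≤
      (v i (S i) - ∑ j ∈ S i, p (soldCount S j i)) +
        ∑ T, x i T * ∑ j ∈ T, p (soldCount S j n) := by
  set U := v i (S i) - ∑ j ∈ S i, p (soldCount S j i)
  have hterm : ∀ T, v i T * x i T ≤ x i T * U + x i T * ∑ j ∈ T, p (soldCount S j n) := by
    intro T
    have hprices : ∑ j ∈ T, p (soldCount S j i) ≤ ∑ j ∈ T, p (soldCount S j n) :=
      sum_le_sum fun j _ => hp (soldCount_mono S j i.isLt.le)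
    rw [← mul_add, mul_comm]
    exact mul_le_mul_of_nonneg_left (by linarith [hrun T]) (hxnn T)
  calc ∑ T, v i T * x i T ≤ ∑ T, (x i T * U + x i T * ∑ j ∈ T, p (soldCount S j n)) :=
        sum_le_sum fun T _ => hterm T
    _ = (∑ T, x i T) * U + ∑ T, x i T * ∑ j ∈ T, p (soldCount S j n) := by
        rw [sum_add_distrib, sum_mul]
    _ ≤ U + ∑ T, x i T * ∑ j ∈ T, p (soldCount S j n) := by
        nlinarith

theorem welfare_ge_of_forall_item_ge (hp : Monotone p) (c : ℝ → ℝ) {α K : ℝ} (hα : 1 ≤ α)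
    (hitem : ∀ (Y : ℕ) (y : ℝ), 0 ≤ y →
      1 / α * (y * p Y - c y) - K ≤ ∑ s ∈ range Y, p s - c Y)
    (hv0 : ∀ i, v i ∅ = 0)
    (hrun : ∀ i : Fin n, ∀ T : Finset (Fin m),
      v i (S i) - ∑ j ∈ S i, p (soldCount S j i) ≥ v i T - ∑ j ∈ T, p (soldCount S j i))
    (hxnn : ∀ i T, 0 ≤ x i T) (hxle : ∀ i, ∑ T, x i T ≤ 1) :
    (∑ i, v i (S i)) - ∑ j, c (soldCount S j n) ≥
      1 / α * ((∑ i, ∑ T, v i T * x i T) -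
        ∑ j, c (∑ i, ∑ T ∈ univ.filter (fun T => j ∈ T), x i T)) - m * K := by
  set U := fun i => v i (S i) - ∑ j ∈ S i, p (soldCount S j i)
  set y := fun j => ∑ i, ∑ T ∈ univ.filter (fun T => j ∈ T), x i T
  have hU : ∀ i, 0 ≤ U i := fun i => by simpa [U, hv0] using hrun i ∅
  have hvalue : ∑ i, ∑ T, v i T * x i T ≤ ∑ i, U i + ∑ j, y j * p (soldCount S j n) := by
    rw [← sum_sum_mul_sum_mem_eq, ← sum_add_distrib]
    exact sum_le_sum fun i _ => sum_value_mul_le hp (hU i) (hrun i) (hxnn i) (hxle i)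
  have hrevenue : ∑ i, v i (S i) = ∑ i, U i + ∑ j, ∑ s ∈ range (soldCount S j n), p s := by
    rw [← sum_sum_soldCount_eq, ← sum_add_distrib]
    simp [U]
  have hitems := sum_le_sum fun j (_ : j ∈ univ) =>
    hitem (soldCount S j n) (y j) (sum_nonneg fun i _ => sum_nonneg fun T _ => hxnn i T)
  simp only [sum_sub_distrib, ← mul_sum, sum_const, card_univ, Fintype.card_fin,
    nsmul_eq_mul] at hitems
  have hα' : 0 ≤ 1 / α := by positivity
  have hUα : 1 / α * ∑ i, U i ≤ ∑ i, U i :=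
    mul_le_of_le_one_left (sum_nonneg fun i _ => hU i) ((div_le_one (by linarith)).2 hα)
  linarith [mul_le_mul_of_nonneg_left hvalue hα']

end mechanism

noncomputable def postedPrice (a γ ε : ℝ) (s : ℕ) : ℝ := a * (γ + 1) ^ 2 * ((s : ℝ) + 1 / ε) ^ γ

section postedPrice

variable {a γ ε : ℝ}

lemma postedPrice_mono (ha : 0 ≤ a) (hγ : 0 ≤ γ) (hε : 0 < ε) : Monotone (postedPrice a γ ε) :=
  fun s t hst => mul_le_mul_of_nonneg_left
    (Real.rpow_le_rpow (by positivity) (by gcongr) hγ) (by positivity)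

lemma marginal_cost_add_potential_increment_le {b : ℝ} (ha : 0 ≤ a) (hγ : 0 ≤ γ) (hε : 0 < ε)
    (hb : 1 ≤ b) (hεb : 1 ≤ ε * b) :
    a * (b ^ (γ + 1) - (b - 1) ^ (γ + 1)) +
        γ * a / (1 + ε) ^ γ * ((b + 1) ^ (γ + 1) - b ^ (γ + 1)) ≤ a * (γ + 1) ^ 2 * b ^ γ := by
  have hcost := mul_le_mul_of_nonneg_left (rpow_add_one_sub_sub_one_rpow_le hγ hb) ha
  have hgrowth : (b + 1) ^ γ ≤ (1 + ε) ^ γ * b ^ γ := by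
    rw [← Real.mul_rpow (by positivity) (by positivity)]
    exact Real.rpow_le_rpow (by positivity) (by linarith) hγ
  have hincrement : (b + 1) ^ (γ + 1) - b ^ (γ + 1) ≤ (γ + 1) * ((1 + ε) ^ γ * b ^ γ) := by
    have := rpow_add_one_sub_sub_one_rpow_le hγ (by linarith : 1 ≤ b + 1)
    rw [add_sub_cancel_right] at this
    nlinarith
  have hpotential := mul_le_mul_of_nonneg_left hincrement
    (by positivity : 0 ≤ γ * a / (1 + ε) ^ γ)
  have hcancel : γ * a / (1 + ε) ^ γ * ((γ + 1) * ((1 + ε) ^ γ * b ^ γ)) =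
      γ * a * (γ + 1) * b ^ γ := by
    field_simp
  nlinarith

lemma sum_range_postedPrice_ge (ha : 0 ≤ a) (hγ : 0 ≤ γ) (hε0 : 0 < ε) (hε1 : ε ≤ 1) (Y : ℕ) :
    a * (((Y : ℝ) + 1 / ε - 1) ^ (γ + 1) - (1 / ε - 1) ^ (γ + 1)) +
        γ * a / (1 + ε) ^ γ * (((Y : ℝ) + 1 / ε) ^ (γ + 1) - (1 / ε) ^ (γ + 1))
      ≤ ∑ s ∈ range Y, postedPrice a γ ε s := by
  have hε : 1 ≤ 1 / ε := by rw [le_div_iff₀ hε0]; linarith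
  set g : ℕ → ℝ := fun s =>
    a * ((s : ℝ) + 1 / ε - 1) ^ (γ + 1) + γ * a / (1 + ε) ^ γ * ((s : ℝ) + 1 / ε) ^ (γ + 1)
  calc _ = g Y - g 0 := by simp only [g, Nat.cast_zero, zero_add]; ring
    _ = ∑ s ∈ range Y, (g (s + 1) - g s) := (sum_range_sub g Y).symm
    _ ≤ ∑ s ∈ range Y, postedPrice a γ ε s := sum_le_sum fun s _ => by
        have hs : (0 : ℝ) ≤ s := Nat.cast_nonneg s
        have hstep := marginal_cost_add_potential_increment_le (b := (s : ℝ) + 1 / ε) ha hγ hε0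
          (by linarith)
          (by rw [mul_add, mul_one_div_cancel hε0.ne']; nlinarith)
        simp only [g, postedPrice, Nat.cast_succ, add_sub_cancel_right,
          show ∀ t : ℝ, t + 1 + 1 / ε = t + 1 / ε + 1 from fun t => by ring]
        linarith

lemma postedPrice_item_bound (ha : 0 ≤ a) (hγ : 1 ≤ γ) (hε0 : 0 < ε) (hε1 : ε ≤ 1) (Y : ℕ)
    {y : ℝ} (hy : 0 ≤ y) :
    1 / ((1 + ε) ^ γ * (γ + 1) ^ ((γ + 1) / γ)) * (y * postedPrice a γ ε Y - a * y ^ (γ + 1)) -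
        (1 / ((1 + ε) ^ γ * (γ + 1) ^ ((γ + 1) / γ)) * (γ * a * (2 / ε) ^ (γ + 1)) +
          a * (1 / ε - 1) ^ (γ + 1))
      ≤ ∑ s ∈ range Y, postedPrice a γ ε s - a * (Y : ℝ) ^ (γ + 1) := by
  have hε : 1 ≤ 1 / ε := by rw [le_div_iff₀ hε0]; linarith
  have hY : (0 : ℝ) ≤ Y := Nat.cast_nonneg Y
  have hyoung := mul_le_mul_of_nonneg_left (mul_sub_rpow_add_one_le_young (p := γ) ha
    (by linarith) (by positivity : 0 < (Y : ℝ) + 1 / ε) hy)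
    (by positivity : 0 ≤ 1 / ((1 + ε) ^ γ * (γ + 1) ^ ((γ + 1) / γ)))
  set D := (γ + 1) ^ ((γ + 1) / γ)
  have hD : 0 < D := by positivity
  have hyoung_eq : 1 / ((1 + ε) ^ γ * D) * (γ * a * D * ((Y : ℝ) + 1 / ε) ^ (γ + 1)) =
      γ * a / (1 + ε) ^ γ * ((Y : ℝ) + 1 / ε) ^ (γ + 1) := by
    field_simp
  have hrevenue := sum_range_postedPrice_ge (γ := γ) ha (by linarith) hε0 hε1 Y
  have hcost : a * (Y : ℝ) ^ (γ + 1) ≤ a * ((Y : ℝ) + 1 / ε - 1) ^ (γ + 1) := by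
    gcongr
    linarith
  have hconst : γ * a / (1 + ε) ^ γ * (1 / ε) ^ (γ + 1) ≤
      1 / ((1 + ε) ^ γ * D) * (γ * a * (2 / ε) ^ (γ + 1)) :=
    calc γ * a / (1 + ε) ^ γ * (1 / ε) ^ (γ + 1)
        = 1 / ((1 + ε) ^ γ * D) * (γ * a * D * (1 / ε) ^ (γ + 1)) := by field_simp
      _ ≤ 1 / ((1 + ε) ^ γ * D) * (γ * a * 2 ^ (γ + 1) * (1 / ε) ^ (γ + 1)) := by
        gcongr
        exact add_one_rpow_div_le_two_rpow hγ
      _ = 1 / ((1 + ε) ^ γ * D) * (γ * a * (2 / ε) ^ (γ + 1)) := by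
        rw [div_eq_mul_one_div 2 ε, Real.mul_rpow (by norm_num) (by positivity)]
        ring
  simp only [postedPrice] at hrevenue ⊢
  linarith

end postedPrice

theorem stmt7_general (m n : ℕ) (a γ ε : ℝ) (ha : 0 < a) (hγ : 1 ≤ γ) (hε0 : 0 < ε) (hε1 : ε ≤ 1)
    (v : Fin n → Finset (Fin m) → ℝ)
    (hv0 : ∀ i, v i ∅ = 0)
    (S : Fin n → Finset (Fin m))
    (hrun : ∀ i : Fin n, ∀ T : Finset (Fin m),
      v i (S i) - ∑ j ∈ S i, a * (γ+1)^2 * ((soldCount S j i : ℝ) + 1/ε) ^ γ ≥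
        v i T - ∑ j ∈ T, a * (γ+1)^2 * ((soldCount S j i : ℝ) + 1/ε) ^ γ)
    (x : Fin n → Finset (Fin m) → ℝ)
    (hxnn : ∀ i T, 0 ≤ x i T)
    (hxle : ∀ i, ∑ T : Finset (Fin m), x i T ≤ 1) :
    (∑ i, v i (S i)) - ∑ j, a * ((soldCount S j n : ℝ)) ^ (γ+1) ≥
      (1 / ((1+ε) ^ γ * (γ+1) ^ ((γ+1)/γ))) *
        ((∑ i, ∑ T : Finset (Fin m), v i T * x i T) -
          ∑ j, a * (∑ i, ∑ T ∈ Finset.univ.filter (fun T : Finset (Fin m) => j ∈ T), x i T) ^ (γ+1))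
      - (m : ℝ) * ((1 / ((1+ε) ^ γ * (γ+1) ^ ((γ+1)/γ))) *
            conj (fun z => a * z ^ (γ+1)) (a * (γ+1) * (2/ε) ^ γ)
          + a * (1/ε - 1) ^ (γ+1)) := by
  have hratio : 1 ≤ (1 + ε) ^ γ * (γ + 1) ^ ((γ + 1) / γ) :=
    one_le_mul_of_one_le_of_one_le (Real.one_le_rpow (by linarith) (by linarith))
      (Real.one_le_rpow (by linarith) (by positivity))
  rw [conj_mul_rpow_add_one ha.le (by linarith) (by positivity)]
  exact welfare_ge_of_forall_item_ge (postedPrice_mono ha.le (by linarith) hε0)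
    (fun z => a * z ^ (γ + 1)) hratio
    (fun Y _ hy => postedPrice_item_bound ha.le hγ hε0 hε1 Y hy) hv0 hrun hxnn hxle

/-- for the power cost `f(y) = a·y^(γ+1)`, the posted-price mechanism
offering item `j` at price `a·(γ+1)²·(s + 1/ε)^γ` after `s` units of item `j` have been
sold is `α`-competitive for `α = (1+ε)^γ·(γ+1)^((γ+1)/γ)` against every fractional
allocation, up to the additive constant `m·((1/α)·f*(f′(2/ε)) + f(1/ε − 1))`,
where `f′(2/ε) = a·(γ+1)·(2/ε)^γ`. -/
theorem stmt7 (m n : ℕ) (a γ ε : ℝ) (ha : 0 < a) (hγ : 1 ≤ γ) (hε0 : 0 < ε) (hε1 : ε ≤ 1)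
    (v : Fin n → Finset (Fin m) → ℝ)
    (hv0 : ∀ i, v i ∅ = 0)
    (hvnn : ∀ i T, 0 ≤ v i T)
    (S : Fin n → Finset (Fin m))
    (hrun : ∀ i : Fin n, ∀ T : Finset (Fin m),
      v i (S i) - ∑ j ∈ S i, a * (γ+1)^2 * ((soldCount S j i : ℝ) + 1/ε) ^ γ ≥
        v i T - ∑ j ∈ T, a * (γ+1)^2 * ((soldCount S j i : ℝ) + 1/ε) ^ γ)
    (x : Fin n → Finset (Fin m) → ℝ)
    (hxnn : ∀ i T, 0 ≤ x i T)
    (hxle : ∀ i, ∑ T : Finset (Fin m), x i T ≤ 1) :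
    (∑ i, v i (S i)) - ∑ j, a * ((soldCount S j n : ℝ)) ^ (γ+1) ≥
      (1 / ((1+ε) ^ γ * (γ+1) ^ ((γ+1)/γ))) *
        ((∑ i, ∑ T : Finset (Fin m), v i T * x i T) -
          ∑ j, a * (∑ i, ∑ T ∈ Finset.univ.filter (fun T : Finset (Fin m) => j ∈ T), x i T) ^ (γ+1))
      - (m : ℝ) * ((1 / ((1+ε) ^ γ * (γ+1) ^ ((γ+1)/γ))) *
            conj (fun z => a * z ^ (γ+1)) (a * (γ+1) * (2/ε) ^ γ)
          + a * (1/ε - 1) ^ (γ+1)) :=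
  stmt7_general m n a γ ε ha hγ hε0 hε1 v hv0 S hrun x hxnn hxle
end

section
/- Let f : [0,∞) → [0,∞) be differentiable with f(0) = 0 and with derivative f′ that is concave, differentiable, and strictly increasing, and let 0 < ε ≤ 1. Consider the posted-price mechanism that offers item j at price f′(2·(s + 1/ε)) when s units of item j have been sold so far, and let α = 4(1+ε). Then for every run of this mechanism on any sequence of buyers and for every fractional allocation x, the welfare W of the mechanism satisfies W ≥ (1/α)·(welfare of x) − m·((1/α)·f*(f′(2/ε)) + f(1/ε − 1)). -/
open Finset

/-!
Write `p s = f'(2(s + 1/ε))` for the posted price, `Y_j` for the final sales, `y_j` for the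
fractional load of item `j`, `V(x) = Σ_{i,T} v_i(T) x_{iT}` and `α = 4(1 + ε)`. Prices only
increase, so each buyer's utility in the run dominates what they would get from any bundle at the
final prices `p(Y_j)`; averaging over `x` gives `V(x) − Σ_j y_j p(Y_j) ≤ U`, the total utility.
Fenchel–Young bounds `y_j p(Y_j)` by `f(y_j) + f*(p(Y_j))`, and `f*(f'(a)) = a f'(a) − f(a)`
because `f` is convex. Concavity of `f'` shows that selling one more unit raises `f*` of the price
by at most `α` times the profit `p(s) − (f(s+1) − f(s))` of that unit, so
`f*(p(Y_j)) ≤ f*(f'(2/ε)) + α (Σ_{s<Y_j} p(s) − f(Y_j))`. Summing over items and using `U ≥ 0`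
yields `V(x) − Σ_j f(y_j) − m f*(f'(2/ε)) ≤ α W`.
-/

lemma ConcaveOn.mul_sub_two_mul_le {g : ℝ → ℝ} (hg : ConcaveOn ℝ (Set.Ici 0) g) {x : ℝ}
    (hx : 0 < x) :
    (2 * x + 2) * (g (2 * x + 2) - g (2 * x)) ≤ 4 * (1 + 1 / x) * (g (2 * x) - g x) := by
  have hslope := hg.slope_anti_adjacent (y := 2 * x) hx.le (by simp only [Set.mem_Ici]; linarith)
    (by linarith) (by linarith : 2 * x < 2 * x + 2)
  rw [show 2 * x + 2 - 2 * x = 2 by ring, show 2 * x - x = x by ring,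
    div_le_div_iff₀ two_pos hx] at hslope
  have hcoef : 4 * (1 + 1 / x) = 2 * (2 * x + 2) / x := by field_simp; ring
  rw [hcoef, div_mul_eq_mul_div, le_div_iff₀ hx]
  linarith [mul_le_mul_of_nonneg_left hslope (by linarith : (0:ℝ) ≤ 2 * x + 2)]

section ConvexCost

variable {f f' : ℝ → ℝ}

lemma convexOn_Ici_of_hasDerivWithinAt
    (hderiv : ∀ y ≥ (0:ℝ), HasDerivWithinAt f (f' y) (Set.Ici 0) y)
    (hmono : MonotoneOn f' (Set.Ici 0)) : ConvexOn ℝ (Set.Ici 0) f := by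
  have hat : ∀ y ∈ Set.Ioi (0:ℝ), HasDerivAt f (f' y) y := fun y hy =>
    (hderiv y (le_of_lt hy)).hasDerivAt (Ici_mem_nhds hy)
  refine MonotoneOn.convexOn_of_deriv (convex_Ici 0)
    (fun y hy => (hderiv y hy).continuousWithinAt) ?_ ?_ <;> rw [interior_Ici]
  · exact fun y hy => (hat y hy).differentiableAt.differentiableWithinAt
  · intro a ha b hb hab
    rw [(hat a ha).deriv, (hat b hb).deriv]
    exact hmono (Set.Ioi_subset_Ici_self ha) (Set.Ioi_subset_Ici_self hb) hab

lemma add_deriv_mul_sub_le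
    (hderiv : ∀ y ≥ (0:ℝ), HasDerivWithinAt f (f' y) (Set.Ici 0) y)
    (hmono : MonotoneOn f' (Set.Ici 0))
    {a z : ℝ} (ha : 0 ≤ a) (hz : 0 ≤ z) :
    f a + f' a * (z - a) ≤ f z := by
  have hconv := convexOn_Ici_of_hasDerivWithinAt hderiv hmono
  rcases lt_trichotomy a z with h | rfl | h
  · have := hconv.le_slope_of_hasDerivWithinAt ha hz h (hderiv a ha)
    rw [slope_def_field, le_div_iff₀ (sub_pos.2 h)] at this
    linarith
  · simp
  · have := hconv.slope_le_of_hasDerivWithinAt hz ha h (hderiv a ha)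
    rw [slope_def_field, div_le_iff₀ (sub_pos.2 h)] at this
    linarith

lemma conj_deriv_eq
    (hderiv : ∀ y ≥ (0:ℝ), HasDerivWithinAt f (f' y) (Set.Ici 0) y)
    (hmono : MonotoneOn f' (Set.Ici 0))
    {a : ℝ} (ha : 0 ≤ a) : conj f (f' a) = f' a * a - f a := by
  refine IsGreatest.csSup_eq ⟨⟨a, ha, rfl⟩, ?_⟩
  rintro _ ⟨z, hz, rfl⟩
  linarith [add_deriv_mul_sub_le hderiv hmono ha hz]

lemma deriv_mul_le_add_conj
    (hderiv : ∀ y ≥ (0:ℝ), HasDerivWithinAt f (f' y) (Set.Ici 0) y)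
    (hmono : MonotoneOn f' (Set.Ici 0))
    {a y : ℝ} (ha : 0 ≤ a) (hy : 0 ≤ y) :
    f' a * y ≤ f y + conj f (f' a) := by
  rw [conj_deriv_eq hderiv hmono ha]
  linarith [add_deriv_mul_sub_le hderiv hmono ha hy]

lemma conj_price_succ_sub_le
    (hderiv : ∀ y ≥ (0:ℝ), HasDerivWithinAt f (f' y) (Set.Ici 0) y)
    (hconc : ConcaveOn ℝ (Set.Ici 0) f') (hmono : MonotoneOn f' (Set.Ici 0))
    {c s : ℝ} (hc : 1 ≤ c) (hs : 0 ≤ s) :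
    conj f (f' (2 * (s + 1 + c))) - conj f (f' (2 * (s + c))) ≤
      4 * (1 + 1 / c) * (f' (2 * (s + c)) - (f (s + 1) - f s)) := by
  set x := s + c
  have hx0 : 0 < x := by linarith
  rw [show 2 * (s + 1 + c) = 2 * x + 2 by ring, conj_deriv_eq hderiv hmono (by linarith),
    conj_deriv_eq hderiv hmono (by linarith)]
  have htangent_right := add_deriv_mul_sub_le hderiv hmono (a := 2 * x) (z := 2 * x + 2)
    (by linarith) (by linarith)
  have htangent_left := add_deriv_mul_sub_le hderiv hmono (a := s + 1) (z := s)
    (by linarith) hs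
  have hincr := hconc.mul_sub_two_mul_le hx0
  have hfx : f' x ≤ f' (2 * x) := hmono hx0.le (by simp only [Set.mem_Ici]; linarith)
    (by linarith)
  have hfs : f' (s + 1) ≤ f' x := hmono (by simp only [Set.mem_Ici]; linarith) hx0.le
    (by linarith)
  calc f' (2 * x + 2) * (2 * x + 2) - f (2 * x + 2) - (f' (2 * x) * (2 * x) - f (2 * x))
      ≤ (2 * x + 2) * (f' (2 * x + 2) - f' (2 * x)) := by linarith
    _ ≤ 4 * (1 + 1 / x) * (f' (2 * x) - f' x) := hincr
    _ ≤ 4 * (1 + 1 / c) * (f' (2 * x) - f' x) := by gcongr; linarith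
    _ ≤ 4 * (1 + 1 / c) * (f' (2 * x) - (f (s + 1) - f s)) := by gcongr; linarith

lemma conj_price_le
    (hf0 : f 0 = 0) (hderiv : ∀ y ≥ (0:ℝ), HasDerivWithinAt f (f' y) (Set.Ici 0) y)
    (hconc : ConcaveOn ℝ (Set.Ici 0) f') (hmono : MonotoneOn f' (Set.Ici 0))
    {c : ℝ} (hc : 1 ≤ c) (Y : ℕ) :
    conj f (f' (2 * (Y + c))) ≤
      conj f (f' (2 * c)) + 4 * (1 + 1 / c) * (∑ s ∈ range Y, f' (2 * (s + c)) - f Y) := by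
  induction Y with
  | zero => simp [hf0]
  | succ Y ih =>
    have hstep := conj_price_succ_sub_le hderiv hconc hmono hc (Nat.cast_nonneg Y)
    push_cast [sum_range_succ]
    linarith

lemma mul_price_le
    (hf0 : f 0 = 0) (hderiv : ∀ y ≥ (0:ℝ), HasDerivWithinAt f (f' y) (Set.Ici 0) y)
    (hconc : ConcaveOn ℝ (Set.Ici 0) f') (hmono : MonotoneOn f' (Set.Ici 0))
    {c : ℝ} (hc : 1 ≤ c) (Y : ℕ) {y : ℝ} (hy : 0 ≤ y) :
    y * f' (2 * (Y + c)) ≤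
      f y + 4 * (1 + 1 / c) * (∑ s ∈ range Y, f' (2 * (s + c)) - f Y) + conj f (f' (2 * c)) := by
  have hY : (0 : ℝ) ≤ 2 * (Y + c) := by positivity
  linarith [deriv_mul_le_add_conj hderiv hmono hY hy, conj_price_le hf0 hderiv hconc hmono hc Y]

end ConvexCost

namespace PostedPrice

variable {m n : ℕ}

def load (x : Fin n → Finset (Fin m) → ℝ) (j : Fin m) : ℝ :=
  ∑ i, ∑ T ∈ univ.filter (fun T : Finset (Fin m) => j ∈ T), x i T

lemma load_nonneg {x : Fin n → Finset (Fin m) → ℝ} (hx : ∀ i T, 0 ≤ x i T) (j : Fin m) :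
    0 ≤ load x j :=
  sum_nonneg fun i _ => sum_nonneg fun T _ => hx i T

lemma sum_mul_sum_eq_sum_load_mul (x : Fin n → Finset (Fin m) → ℝ) (q : Fin m → ℝ) :
    ∑ i, ∑ T, x i T * ∑ j ∈ T, q j = ∑ j, load x j * q j := by
  calc ∑ i, ∑ T, x i T * ∑ j ∈ T, q j
      = ∑ i, ∑ j, ∑ T ∈ univ.filter (fun T : Finset (Fin m) => j ∈ T), x i T * q j := by
        simp only [mul_sum]
        exact sum_congr rfl fun i _ => sum_comm' (by simp)
    _ = ∑ j, load x j * q j := by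
        simp only [load, sum_mul]
        exact sum_comm

variable (S : Fin n → Finset (Fin m))

lemma soldCount_mono (j : Fin m) : Monotone (soldCount S j) := fun _ _ h =>
  card_le_card <| monotone_filter_right _ fun _ _ hi => ⟨hi.1.trans_le h, hi.2⟩

lemma soldCount_lt_soldCount {j : Fin m} {i₁ : Fin n} {i₂ : ℕ} (h : (i₁ : ℕ) < i₂)
    (hj : j ∈ S i₁) : soldCount S j i₁ < soldCount S j i₂ := by
  refine card_lt_card <| (ssubset_iff_of_subset <|
    monotone_filter_right _ fun _ _ hi => ⟨hi.1.trans h, hi.2⟩).2 ⟨i₁, ?_, ?_⟩ <;> simp [h, hj]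

lemma strictMonoOn_soldCount (j : Fin m) :
    StrictMonoOn (fun i : Fin n => soldCount S j i) {i | j ∈ S i} :=
  fun _ hi₁ _ _ h => soldCount_lt_soldCount S h hi₁

lemma image_soldCount_eq_range (j : Fin m) :
    (univ.filter fun i : Fin n => j ∈ S i).image (fun i : Fin n => soldCount S j i) =
      range (soldCount S j n) := by
  refine eq_of_subset_of_card_le ?_ ?_
  · simp only [subset_iff, mem_image, mem_filter, mem_univ, true_and, mem_range]
    rintro _ ⟨i, hi, rfl⟩
    exact soldCount_lt_soldCount S i.isLt hi
  · rw [card_range, card_image_of_injOn ((strictMonoOn_soldCount S j).injOn.mono (by simp))]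
    exact card_le_card fun i => by simp +contextual

lemma sum_sum_price_soldCount (p : ℕ → ℝ) :
    ∑ i, ∑ j ∈ S i, p (soldCount S j i) = ∑ j, ∑ s ∈ range (soldCount S j n), p s := by
  simp only [← image_soldCount_eq_range]
  rw [sum_comm' (t' := univ) (s' := fun j => univ.filter fun i => j ∈ S i) (by simp)]
  refine sum_congr rfl fun j _ => (sum_image ?_).symm
  exact (strictMonoOn_soldCount S j).injOn.mono (by simp)

variable (v : Fin n → Finset (Fin m) → ℝ) (p : ℕ → ℝ)

def utility (i : Fin n) : ℝ := v i (S i) - ∑ j ∈ S i, p (soldCount S j i)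

def IsPostedPriceRun : Prop :=
  ∀ i T, v i T - ∑ j ∈ T, p (soldCount S j i) ≤ utility S v p i

variable {S v p}

lemma utility_nonneg (hv0 : ∀ i, v i ∅ = 0)
    (hrun : IsPostedPriceRun S v p)
    (i : Fin n) : 0 ≤ utility S v p i := by
  simpa [hv0] using hrun i ∅

lemma sub_final_price_le_utility (hp : Monotone p)
    (hrun : IsPostedPriceRun S v p)
    (i : Fin n) (T : Finset (Fin m)) :
    v i T - ∑ j ∈ T, p (soldCount S j n) ≤ utility S v p i := by
  have hprice_mono : ∑ j ∈ T, p (soldCount S j i) ≤ ∑ j ∈ T, p (soldCount S j n) :=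
    sum_le_sum fun j _ => hp (soldCount_mono S j i.isLt.le)
  linarith [hrun i T]

lemma fractional_value_sub_le_sum_utility (hp : Monotone p) (hv0 : ∀ i, v i ∅ = 0)
    (hrun : IsPostedPriceRun S v p)
    {x : Fin n → Finset (Fin m) → ℝ} (hxnn : ∀ i T, 0 ≤ x i T)
    (hxle : ∀ i, ∑ T : Finset (Fin m), x i T ≤ 1) :
    ∑ i, ∑ T, v i T * x i T - ∑ j, load x j * p (soldCount S j n) ≤
      ∑ i, utility S v p i := by
  rw [← sum_mul_sum_eq_sum_load_mul, ← sum_sub_distrib]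
  refine sum_le_sum fun i _ => ?_
  set u := utility S v p i
  calc ∑ T, v i T * x i T - ∑ T, x i T * ∑ j ∈ T, p (soldCount S j n)
      = ∑ T, x i T * (v i T - ∑ j ∈ T, p (soldCount S j n)) := by
        rw [← sum_sub_distrib]; exact sum_congr rfl fun T _ => by ring
    _ ≤ ∑ T, x i T * u :=
        sum_le_sum fun T _ => mul_le_mul_of_nonneg_left
          (sub_final_price_le_utility hp hrun i T) (hxnn i T)
    _ = (∑ T, x i T) * u := (sum_mul _ _ _).symm
    _ ≤ u := mul_le_of_le_one_left (utility_nonneg hv0 hrun i) (hxle i)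

theorem welfare_ge_of_mul_price_le (hp : Monotone p) (hv0 : ∀ i, v i ∅ = 0)
    (hrun : IsPostedPriceRun S v p)
    {x : Fin n → Finset (Fin m) → ℝ} (hxnn : ∀ i T, 0 ≤ x i T)
    (hxle : ∀ i, ∑ T : Finset (Fin m), x i T ≤ 1)
    {g : ℝ → ℝ} {α C : ℝ} (hα : 1 ≤ α)
    (hitem : ∀ j, load x j * p (soldCount S j n) ≤
      g (load x j) + α * (∑ s ∈ range (soldCount S j n), p s - g (soldCount S j n)) + C) :
    ∑ i, ∑ T, v i T * x i T - ∑ j, g (load x j) - m * C ≤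
      α * (∑ i, v i (S i) - ∑ j, g (soldCount S j n)) := by
  have hfrac := fractional_value_sub_le_sum_utility hp hv0 hrun hxnn hxle
  have hutil : 0 ≤ ∑ i, utility S v p i := sum_nonneg fun i _ => utility_nonneg hv0 hrun i
  have hitems := sum_le_sum fun j (_ : j ∈ univ) => hitem j
  simp only [utility] at hfrac hutil
  rw [sum_sub_distrib, sum_sum_price_soldCount] at hfrac hutil
  simp only [sum_add_distrib, ← mul_sum, sum_sub_distrib, sum_const, card_univ, Fintype.card_fin,
    nsmul_eq_mul] at hitems
  linarith [mul_le_mul_of_nonneg_right hα hutil]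

end PostedPrice

theorem stmt8_general (m n : ℕ) (ε : ℝ) (hε0 : 0 < ε) (hε1 : ε ≤ 1)
    (f f' : ℝ → ℝ)
    (hf0 : f 0 = 0)
    (hfnn : ∀ y ≥ (0:ℝ), 0 ≤ f y)
    (hderiv : ∀ y ≥ (0:ℝ), HasDerivWithinAt f (f' y) (Set.Ici 0) y)
    (h'conc : ConcaveOn ℝ (Set.Ici 0) f')
    (h'mono : StrictMonoOn f' (Set.Ici 0))
    (v : Fin n → Finset (Fin m) → ℝ)
    (hv0 : ∀ i, v i ∅ = 0)
    (S : Fin n → Finset (Fin m))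
    (hrun : ∀ i : Fin n, ∀ T : Finset (Fin m),
      v i (S i) - ∑ j ∈ S i, f' (2 * ((soldCount S j i : ℝ) + 1/ε)) ≥
        v i T - ∑ j ∈ T, f' (2 * ((soldCount S j i : ℝ) + 1/ε)))
    (x : Fin n → Finset (Fin m) → ℝ)
    (hxnn : ∀ i T, 0 ≤ x i T)
    (hxle : ∀ i, ∑ T : Finset (Fin m), x i T ≤ 1) :
    (∑ i, v i (S i)) - ∑ j, f (soldCount S j n) ≥
      (1 / (4 * (1+ε))) *
        ((∑ i, ∑ T : Finset (Fin m), v i T * x i T) -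
          ∑ j, f (∑ i, ∑ T ∈ Finset.univ.filter (fun T : Finset (Fin m) => j ∈ T), x i T))
      - (m : ℝ) * ((1 / (4 * (1+ε))) * conj f (f' (2/ε)) + f (1/ε - 1)) := by
  have hc : 1 ≤ 1 / ε := by rwa [le_div_iff₀ hε0, one_mul]
  have hmono := h'mono.monotoneOn
  have hprice_mono : Monotone fun s : ℕ => f' (2 * (s + 1 / ε)) := fun a b hab =>
    hmono (Set.mem_Ici.2 (by positivity)) (Set.mem_Ici.2 (by positivity)) (by gcongr)
  have hwelfare := PostedPrice.welfare_ge_of_mul_price_le hprice_mono hv0 hrun hxnn hxle (g := f)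
    (C := conj f (f' (2 / ε))) (by linarith : 1 ≤ 4 * (1 + ε)) fun j => by
      simpa only [one_div_one_div, mul_one_div] using
        mul_price_le hf0 hderiv h'conc hmono hc (soldCount S j n) (PostedPrice.load_nonneg hxnn j)
  have hslack : 0 ≤ m * f (1 / ε - 1) := mul_nonneg m.cast_nonneg (hfnn _ (by linarith))
  have hα : 0 < 4 * (1 + ε) := by positivity
  have hscaled := (div_le_iff₀' hα).2 hwelfare
  unfold PostedPrice.load at hscaled
  linear_combination hscaled + hslack

/-- for a production cost `f : [0,∞) → [0,∞)` with `f(0) = 0` whose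
derivative `f'` is concave, differentiable, and strictly increasing, the posted-price
mechanism offering item `j` at price `f'(2·(s + 1/ε))` after `s` units of item `j` have
been sold is `4(1+ε)`-competitive against every fractional allocation, up to the
additive constant `m·((1/(4(1+ε)))·f*(f'(2/ε)) + f(1/ε − 1))`. -/
theorem stmt8 (m n : ℕ) (ε : ℝ) (hε0 : 0 < ε) (hε1 : ε ≤ 1)
    (f f' : ℝ → ℝ)
    (hf0 : f 0 = 0)
    (hfnn : ∀ y ≥ (0:ℝ), 0 ≤ f y)
    (hderiv : ∀ y ≥ (0:ℝ), HasDerivWithinAt f (f' y) (Set.Ici 0) y)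
    (h'conc : ConcaveOn ℝ (Set.Ici 0) f')
    (h'diff : DifferentiableOn ℝ f' (Set.Ici 0))
    (h'mono : StrictMonoOn f' (Set.Ici 0))
    (v : Fin n → Finset (Fin m) → ℝ)
    (hv0 : ∀ i, v i ∅ = 0)
    (hvnn : ∀ i T, 0 ≤ v i T)
    (S : Fin n → Finset (Fin m))
    (hrun : ∀ i : Fin n, ∀ T : Finset (Fin m),
      v i (S i) - ∑ j ∈ S i, f' (2 * ((soldCount S j i : ℝ) + 1/ε)) ≥
        v i T - ∑ j ∈ T, f' (2 * ((soldCount S j i : ℝ) + 1/ε)))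
    (x : Fin n → Finset (Fin m) → ℝ)
    (hxnn : ∀ i T, 0 ≤ x i T)
    (hxle : ∀ i, ∑ T : Finset (Fin m), x i T ≤ 1) :
    (∑ i, v i (S i)) - ∑ j, f (soldCount S j n) ≥
      (1 / (4 * (1+ε))) *
        ((∑ i, ∑ T : Finset (Fin m), v i T * x i T) -
          ∑ j, f (∑ i, ∑ T ∈ Finset.univ.filter (fun T : Finset (Fin m) => j ∈ T), x i T))
      - (m : ℝ) * ((1 / (4 * (1+ε))) * conj f (f' (2/ε)) + f (1/ε - 1)) :=
  stmt8_general m n ε hε0 hε1 f f' hf0 hfnn hderiv h'conc h'mono v hv0 S hrun x hxnn hxle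
end

section
/- In the limited-supply setting with k units of each of m items, values in {0} ∪ [v_min, v_max], ρ = v_max/v_min, r = (2mρ)^{1/k}, and pricing function p(y) = (v_min/(2m))·r^y, let α = k·(r − 1) = k·((2mρ)^{1/k} − 1). Then for every run of the posted-price mechanism M_p on any sequence of buyers and for every fractional allocation x that sells at most k units of each item, the welfare W = Σ_i v_i(S_i) of the mechanism satisfies W ≥ (1/α)·(welfare of x) − k·v_min/(2α). -/
open Finset

/-- The limited-supply pricing function `p(y) = (v_min/(2m))·r^y` with
`r = (2mρ)^(1/k)` and `ρ = v_max/v_min`. -/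
noncomputable def limPrice (m k : ℕ) (vmin vmax : ℝ) (y : ℕ) : ℝ :=
  vmin / (2 * m) * ((2 * (m:ℝ) * (vmax/vmin)) ^ ((1:ℝ)/(k:ℝ))) ^ y

/-- The competitive parameter `α = k·(r − 1) = k·((2mρ)^(1/k) − 1)`. -/
noncomputable def limAlpha (m k : ℕ) (vmin vmax : ℝ) : ℝ :=
  (k:ℝ) * ((2 * (m:ℝ) * (vmax/vmin)) ^ ((1:ℝ)/(k:ℝ)) - 1)

lemma filter_lt_max' {n : ℕ} (F : Finset (Fin n)) (hne : F.Nonempty) :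
    F.filter (fun i' : Fin n => (i' : ℕ) < ((F.max' hne : Fin n) : ℕ)) = F.erase (F.max' hne) := by
  ext b
  simp only [mem_filter, mem_erase]
  constructor
  · rintro ⟨hb, hlt⟩
    exact ⟨by rintro rfl; omega, hb⟩
  · rintro ⟨hne', hb⟩
    refine ⟨hb, ?_⟩
    have h1 : (b : ℕ) ≤ ((F.max' hne : Fin n) : ℕ) := F.le_max' b hb
    have hne2 : (b : ℕ) ≠ ((F.max' hne : Fin n) : ℕ) := fun h => hne' (Fin.ext h)
    omega

lemma sum_rank {n : ℕ} (f : ℕ → ℝ) (F : Finset (Fin n)) :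
    ∑ i ∈ F, f ((F.filter (fun i' : Fin n => (i' : ℕ) < (i : ℕ))).card)
      = ∑ y ∈ Finset.range F.card, f y := by
  induction' hc : F.card with c ih generalizing F
  · rw [card_eq_zero] at hc; subst hc; simp
  · have hne : F.Nonempty := by rw [← card_pos, hc]; omega
    set i0 := F.max' hne with hi0
    have hi0mem : i0 ∈ F := F.max'_mem hne
    have hmax : ∀ b ∈ F, b ≤ i0 := fun b hb => F.le_max' b hb
    have herase : (F.erase i0).card = c := by
      rw [card_erase_of_mem hi0mem, hc]; rfl
    have hfilt_i0 : F.filter (fun i' : Fin n => (i' : ℕ) < (i0 : ℕ)) = F.erase i0 :=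
      filter_lt_max' F hne
    have hfilt_other : ∀ b ∈ F.erase i0,
        F.filter (fun i' : Fin n => (i' : ℕ) < (b : ℕ)) =
          (F.erase i0).filter (fun i' : Fin n => (i' : ℕ) < (b : ℕ)) := by
      intro b hb
      rw [filter_erase, erase_eq_of_notMem]
      simp only [mem_filter]
      rintro ⟨-, hlt⟩
      have hble : (b:ℕ) ≤ (i0:ℕ) := hmax b (mem_of_mem_erase hb)
      omega
    have hins : F = insert i0 (F.erase i0) := (insert_erase hi0mem).symm
    rw [hins, sum_insert (notMem_erase _ _)]
    have h1 : ((insert i0 (F.erase i0)).filter (fun i' : Fin n => (i':ℕ) < (i0:ℕ))).card = c := by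
      rw [← hins, hfilt_i0, herase]
    rw [h1]
    have h2 : ∑ i ∈ F.erase i0,
        f (((insert i0 (F.erase i0)).filter (fun i' : Fin n => (i':ℕ) < (i:ℕ))).card)
        = ∑ i ∈ F.erase i0, f (((F.erase i0).filter (fun i' : Fin n => (i':ℕ) < (i:ℕ))).card) := by
      apply sum_congr rfl
      intro b hb
      rw [← hins, hfilt_other b hb]
    rw [h2, ih _ herase, Finset.sum_range_succ]
    ring

lemma soldCount_eq {m n : ℕ} (S : Fin n → Finset (Fin m)) (j : Fin m) (i : ℕ) :
    soldCount S j i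
      = ((Finset.univ.filter (fun i' : Fin n => j ∈ S i')).filter
          (fun i' : Fin n => (i' : ℕ) < i)).card := by
  unfold soldCount
  rw [filter_filter]
  congr 1
  apply filter_congr
  intro a _
  tauto

lemma soldCount_mono_s10 {m n : ℕ} (S : Fin n → Finset (Fin m)) (j : Fin m) {i i' : ℕ}
    (h : i ≤ i') : soldCount S j i ≤ soldCount S j i' := by
  apply card_le_card
  intro a ha
  simp only [mem_filter] at ha ⊢
  exact ⟨ha.1, lt_of_lt_of_le ha.2.1 h, ha.2.2⟩

lemma soldCount_top {m n : ℕ} (S : Fin n → Finset (Fin m)) (j : Fin m) :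
    soldCount S j n = (Finset.univ.filter (fun i' : Fin n => j ∈ S i')).card := by
  unfold soldCount
  congr 1
  apply filter_congr
  intro a _
  simp [a.isLt]

lemma log_ge_one_sub_inv {x : ℝ} (hx : 0 < x) : 1 - 1/x ≤ Real.log x := by
  have h := Real.log_le_sub_one_of_pos (x := 1/x) (by positivity)
  rw [Real.log_div one_ne_zero (ne_of_gt hx), Real.log_one] at h
  linarith

lemma pade_log {A : ℝ} (h2 : 2 ≤ A) (h3 : A ≤ 3) : 2*(A-1)/(A+1) ≤ Real.log A := by
  have hA : 0 < A := by linarith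
  have h1 : Real.log A = Real.log 2 + Real.log (A/2) := by
    rw [← Real.log_mul (by norm_num) (by positivity)]
    congr 1; ring
  have h2' : 1 - 2/A ≤ Real.log (A/2) := by
    have h := log_ge_one_sub_inv (x := A/2) (by linarith)
    have he : 1/(A/2) = 2/A := by field_simp
    rw [he] at h; exact h
  have hl2 : (0.6931471803 : ℝ) < Real.log 2 := Real.log_two_gt_d9
  have e : (2/3 : ℝ) + (1 - 2/A) = (5*A - 6)/(3*A) := by field_simp; ring
  have key : 2*(A-1)/(A+1) ≤ (5*A-6)/(3*A) := by
    rw [div_le_div_iff₀ (by linarith) (by linarith)]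
    nlinarith [mul_nonneg (sub_nonneg.2 h2) (sub_nonneg.2 h3)]
  calc 2*(A-1)/(A+1) ≤ (5*A-6)/(3*A) := key
    _ = 2/3 + (1 - 2/A) := e.symm
    _ ≤ Real.log 2 + Real.log (A/2) := by linarith
    _ = Real.log A := h1.symm

lemma a_one_sub_log {A : ℝ} (hA : 0 < A) : A * (1 - Real.log A) ≤ 1 := by
  have h := log_ge_one_sub_inv hA
  have h2 : A * (1 - Real.log A) ≤ A * (1/A) :=
    mul_le_mul_of_nonneg_left (by linarith) hA.le
  rwa [mul_one_div, div_self (ne_of_gt hA)] at h2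

lemma exp_le_one_add_two_mul {x : ℝ} (h0 : 0 ≤ x) (h1 : x ≤ 1) :
    Real.exp x ≤ 1 + 2*x := by
  have hc := convexOn_exp.2 (Set.mem_univ (0:ℝ)) (Set.mem_univ (1:ℝ))
    (by linarith : (0:ℝ) ≤ 1 - x) h0 (by ring)
  simp only [smul_eq_mul, mul_zero, mul_one, zero_add, Real.exp_zero] at hc
  have he : Real.exp 1 < 2.7182818286 := Real.exp_one_lt_d9
  nlinarith [hc]

lemma IQ1 {s A u α : ℝ} {k Y : ℕ}
    (hs : 0 < s) (hα : α = k * s) (hα1 : α < 1)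
    (hb1 : 1 + (Y:ℝ)*s ≤ u)
    (hb2 : ((k:ℝ)-(Y:ℝ))*s*u ≤ A - u)
    (hu2 : 2 ≤ u)
    (hA1 : A*(1-α) ≤ 1)
    (hA2 : 2*(A-1) ≤ α*(A+1))
    (hA0 : 0 ≤ A) :
    (1-α)*Y*A + ((k:ℝ)-Y)*u ≤ k := by
  have h1 : s*((1-α)*Y*A) ≤ (1-α)*A*(u-1) := by
    have hy : (Y:ℝ)*s ≤ u - 1 := by linarith
    have hnn : 0 ≤ (1-α)*A := by nlinarith
    nlinarith [mul_le_mul_of_nonneg_left hy hnn]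
  have h2 : s*(((k:ℝ)-Y)*u) ≤ A - u := by nlinarith
  have h3 : (1-α)*A*(u-1) + (A-u) ≤ α := by
    have hfac : ((1-α)*A - 1) * (u - 2) ≤ 0 :=
      mul_nonpos_of_nonpos_of_nonneg (by linarith) (by linarith)
    nlinarith
  have h4 : s*((1-α)*Y*A + ((k:ℝ)-Y)*u) ≤ s*(k:ℝ) := by
    rw [mul_add]
    calc s*((1-α)*Y*A) + s*(((k:ℝ)-Y)*u) ≤ (1-α)*A*(u-1) + (A-u) := by linarith
      _ ≤ α := h3
      _ = s*k := by rw [hα]; ring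
  exact le_of_mul_le_mul_left h4 hs

lemma IQ2 {s : ℝ} (hs : 0 ≤ s) (Y : ℕ) (h : s*(Y:ℝ) ≤ 1) :
    (1+s)^Y ≤ 1 + 2*(s*Y) := by
  have h1 : (1+s)^Y ≤ (Real.exp s)^Y := by
    apply pow_le_pow_left₀ (by linarith)
    linarith [Real.add_one_le_exp s]
  have h2 : (Real.exp s)^Y = Real.exp ((Y:ℝ)*s) := (Real.exp_nat_mul s Y).symm
  have h3 : Real.exp ((Y:ℝ)*s) ≤ 1 + 2*((Y:ℝ)*s) := by
    apply exp_le_one_add_two_mul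
    · positivity
    · linarith [show (Y:ℝ)*s = s*Y by ring]
  calc (1+s)^Y ≤ (Real.exp s)^Y := h1
    _ = Real.exp ((Y:ℝ)*s) := h2
    _ ≤ 1 + 2*((Y:ℝ)*s) := h3
    _ = 1 + 2*(s*Y) := by ring

set_option maxHeartbeats 2000000 in
/-- in the limited-supply setting (`k` units of each of `m` items, values
in `{0} ∪ [v_min, v_max]`), the posted-price mechanism with pricing function
`p(y) = (v_min/(2m))·(2mρ)^(y/k)` obtains welfare at least
`(1/α)·(welfare of x) − k·v_min/(2α)` for `α = k·((2mρ)^(1/k) − 1)`, against every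
fractional allocation `x` selling at most `k` units of each item. -/
theorem stmt10 (m k n : ℕ) (vmin vmax : ℝ)
    (hm : 0 < m) (hk : 0 < k) (hmin : 0 < vmin) (hle : vmin ≤ vmax)
    (v : Fin n → Finset (Fin m) → ℝ)
    (hv0 : ∀ i, v i ∅ = 0)
    (hvrange : ∀ i T, v i T = 0 ∨ (vmin ≤ v i T ∧ v i T ≤ vmax))
    (S : Fin n → Finset (Fin m))
    (hopt : ∀ i : Fin n, ∀ T : Finset (Fin m),
      v i (S i) - ∑ j ∈ S i, limPrice m k vmin vmax (soldCount S j i) ≥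
        v i T - ∑ j ∈ T, limPrice m k vmin vmax (soldCount S j i))
    (hpos : ∀ i : Fin n, S i ≠ ∅ →
      0 < v i (S i) - ∑ j ∈ S i, limPrice m k vmin vmax (soldCount S j i))
    (x : Fin n → Finset (Fin m) → ℝ)
    (hxnn : ∀ i T, 0 ≤ x i T)
    (hxle : ∀ i, ∑ T : Finset (Fin m), x i T ≤ 1)
    (hxsupply : ∀ j : Fin m,
      ∑ i, ∑ T ∈ Finset.univ.filter (fun T : Finset (Fin m) => j ∈ T), x i T ≤ (k:ℝ)) :
    ∑ i, v i (S i) ≥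
      (1 / limAlpha m k vmin vmax) * (∑ i, ∑ T : Finset (Fin m), v i T * x i T)
        - (k:ℝ) * vmin / (2 * limAlpha m k vmin vmax) := by
  -- ===== setup =====
  have hm' : (0:ℝ) < m := by exact_mod_cast hm
  have hk' : (0:ℝ) < k := by exact_mod_cast hk
  set A : ℝ := 2 * (m:ℝ) * (vmax/vmin) with hAdef
  set Rr : ℝ := A ^ ((1:ℝ)/(k:ℝ)) with hRdef
  set C : ℝ := vmin / (2 * m) with hCdef
  have hC : 0 < C := by positivity
  have hrho : 1 ≤ vmax / vmin := (one_le_div hmin).mpr hle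
  have hA2 : 2 ≤ A := by
    rw [hAdef]
    nlinarith [hm, show (1:ℝ) ≤ m by exact_mod_cast hm]
  have hA0 : (0:ℝ) < A := by linarith
  have hR1 : 1 < Rr := by
    rw [hRdef]
    apply Real.one_lt_rpow_iff_of_pos hA0 |>.mpr
    exact Or.inl ⟨by linarith, by positivity⟩
  have hRk : Rr ^ k = A := by
    rw [hRdef, ← Real.rpow_natCast (A ^ ((1:ℝ)/(k:ℝ))) k, ← Real.rpow_mul hA0.le]
    rw [one_div, inv_mul_cancel₀ (ne_of_gt hk')]
    exact Real.rpow_one A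
  have hp : ∀ y, limPrice m k vmin vmax y = C * Rr ^ y := fun y => rfl
  have hα : limAlpha m k vmin vmax = (k:ℝ) * (Rr - 1) := rfl
  set alp : ℝ := (k:ℝ) * (Rr - 1) with halp
  have halp0 : 0 < alp := by
    have : 0 < Rr - 1 := by linarith
    positivity
  have hvmaxCA : vmax = C * A := by
    rw [hCdef, hAdef]
    field_simp
  have hvminC : vmin = 2 * (m:ℝ) * C := by
    rw [hCdef]; field_simp
  have hpmono : ∀ {y y' : ℕ}, y ≤ y' → limPrice m k vmin vmax y ≤ limPrice m k vmin vmax y' := by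
    intro y y' hyy
    rw [hp, hp]
    have h := pow_le_pow_right₀ (le_of_lt hR1) hyy
    nlinarith [h]
  have hppos : ∀ y, 0 < limPrice m k vmin vmax y := by
    intro y
    rw [hp]
    have : (0:ℝ) < Rr ^ y := by positivity
    positivity
  set pay : Fin n → ℝ := fun i => ∑ j ∈ S i, limPrice m k vmin vmax (soldCount S j i) with hpay
  set u : Fin n → ℝ := fun i => v i (S i) - pay i with hu
  set P : Fin m → ℝ := fun j => limPrice m k vmin vmax (soldCount S j n) with hPdef
  set F : Fin m → Finset (Fin n) := fun j => univ.filter (fun i' : Fin n => j ∈ S i') with hF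
  have hu0 : ∀ i, 0 ≤ u i := by
    intro i
    have h := hopt i ∅
    simp only [sum_empty, hv0 i, sub_zero] at h
    exact h
  have hswap : ∑ i, pay i = ∑ j, ∑ y ∈ Finset.range (soldCount S j n), limPrice m k vmin vmax y := by
    have h1 : ∑ i, pay i = ∑ j : Fin m, ∑ i ∈ F j, limPrice m k vmin vmax (soldCount S j i) := by
      rw [hpay]
      exact Finset.sum_comm' (fun i j => by simp [hF])
    rw [h1]
    apply Finset.sum_congr rfl
    intro j _
    have h2 : ∀ i ∈ F j, limPrice m k vmin vmax (soldCount S j i)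
        = limPrice m k vmin vmax (((F j).filter (fun i' : Fin n => (i' : ℕ) < (i : ℕ))).card) := by
      intro i _
      rw [soldCount_eq]
    rw [Finset.sum_congr rfl h2, sum_rank (fun y => limPrice m k vmin vmax y) (F j)]
    rw [soldCount_top]
  have hgeom : ∀ Yv : ℕ, alp * (∑ y ∈ Finset.range Yv, limPrice m k vmin vmax y)
      = (k:ℝ) * C * (Rr ^ Yv - 1) := by
    intro Yv
    have h1 : ∑ y ∈ Finset.range Yv, limPrice m k vmin vmax y
        = C * ((Rr ^ Yv - 1) / (Rr - 1)) := by
      simp only [hp]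
      rw [← Finset.mul_sum, geom_sum_eq (by linarith : Rr ≠ 1)]
    have hRne : Rr - 1 ≠ 0 := by linarith
    rw [h1, halp]
    field_simp
  have hmC : (m:ℝ) * ((k:ℝ) * C) = (k:ℝ) * vmin / 2 := by
    rw [hvminC]; ring
  have hkey : (k:ℝ) * ∑ j, P j = alp * (∑ i, pay i) + (k:ℝ) * vmin / 2 := by
    have h1 : ∀ j : Fin m, alp * (∑ y ∈ Finset.range (soldCount S j n), limPrice m k vmin vmax y)
        = (k:ℝ) * P j - (k:ℝ) * C := by
      intro j
      rw [hgeom, hPdef]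
      simp only [hp]
      ring
    have h2 : alp * (∑ i, pay i) = ∑ j, ((k:ℝ) * P j - (k:ℝ) * C) := by
      rw [hswap, Finset.mul_sum]
      exact Finset.sum_congr rfl (fun j _ => h1 j)
    rw [h2, Finset.sum_sub_distrib, Finset.sum_const, card_univ, Fintype.card_fin,
      Finset.mul_sum, nsmul_eq_mul]
    rw [hmC]
    ring
  -- reduce goal
  rw [ge_iff_le, hα]
  suffices hmain : (∑ i, ∑ T : Finset (Fin m), v i T * x i T)
      ≤ alp * (∑ i, v i (S i)) + (k:ℝ) * vmin / 2 by
    have e : (1/alp)*(alp*(∑ i, v i (S i)) + (k:ℝ)*vmin/2)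
        = (∑ i, v i (S i)) + (k:ℝ)*vmin/(2*alp) := by
      field_simp
    have h2 := mul_le_mul_of_nonneg_left hmain (by positivity : (0:ℝ) ≤ 1/alp)
    rw [e] at h2
    linarith only [h2]
  rcases le_or_gt 1 alp with halp1 | halp1
  · -- ===== case alpha ≥ 1 =====
    have hfeas : ∀ i T, v i T ≤ u i + ∑ j ∈ T, P j := by
      intro i T
      have h := hopt i T
      have hle2 : ∑ j ∈ T, limPrice m k vmin vmax (soldCount S j i) ≤ ∑ j ∈ T, P j := by
        apply sum_le_sum
        intro j _
        exact hpmono (soldCount_mono_s10 S j (le_of_lt i.isLt))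
      have hui : u i = v i (S i) - pay i := rfl
      linarith only [h, hle2, hui]
    have hstep1 : ∀ i : Fin n,
        ∑ T : Finset (Fin m), v i T * x i T
          ≤ u i + ∑ T : Finset (Fin m), (∑ j ∈ T, P j) * x i T := by
      intro i
      have h1 : ∑ T : Finset (Fin m), v i T * x i T
          ≤ ∑ T : Finset (Fin m), (u i + ∑ j ∈ T, P j) * x i T :=
        sum_le_sum (fun T _ => mul_le_mul_of_nonneg_right (hfeas i T) (hxnn i T))
      have h2 : ∑ T : Finset (Fin m), (u i + ∑ j ∈ T, P j) * x i T
          = u i * (∑ T : Finset (Fin m), x i T)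
            + ∑ T : Finset (Fin m), (∑ j ∈ T, P j) * x i T := by
        simp only [add_mul]
        rw [Finset.sum_add_distrib, ← Finset.mul_sum]
      have h3 : u i * (∑ T : Finset (Fin m), x i T) ≤ u i := by
        nlinarith only [hu0 i, hxle i]
      linarith only [h1, h2.le, h2.ge, h3]
    have hQ : ∑ i, ∑ T : Finset (Fin m), (∑ j ∈ T, P j) * x i T ≤ (k:ℝ) * ∑ j, P j := by
      have hswap2 : ∀ i : Fin n, ∑ T : Finset (Fin m), (∑ j ∈ T, P j) * x i T
          = ∑ j : Fin m, ∑ T ∈ univ.filter (fun T : Finset (Fin m) => j ∈ T), P j * x i T := by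
        intro i
        have h0 : ∀ T : Finset (Fin m), (∑ j ∈ T, P j) * x i T = ∑ j ∈ T, P j * x i T :=
          fun T => Finset.sum_mul _ _ _
        rw [Finset.sum_congr rfl (fun T _ => h0 T)]
        rw [Finset.sum_comm' (s := univ) (t := fun T => T) (t' := univ)
          (s' := fun j => univ.filter (fun T : Finset (Fin m) => j ∈ T))]
        intro T j
        simp
      rw [Finset.sum_congr rfl (fun i _ => hswap2 i), Finset.sum_comm, Finset.mul_sum]
      apply sum_le_sum
      intro j _
      have hZ := hxsupply j
      have hPn : 0 ≤ P j := (hppos _).le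
      have h4 : ∑ i, ∑ T ∈ univ.filter (fun T : Finset (Fin m) => j ∈ T), P j * x i T
          = P j * ∑ i, ∑ T ∈ univ.filter (fun T : Finset (Fin m) => j ∈ T), x i T := by
        rw [Finset.mul_sum]
        apply sum_congr rfl
        intro i _
        rw [Finset.mul_sum]
      rw [h4, mul_comm ((k:ℝ)) (P j)]
      exact mul_le_mul_of_nonneg_left hZ hPn
    have hOPT : ∑ i, ∑ T : Finset (Fin m), v i T * x i T
        ≤ (∑ i, u i) + (k:ℝ) * ∑ j, P j := by
      calc ∑ i, ∑ T : Finset (Fin m), v i T * x i T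
          ≤ ∑ i, (u i + ∑ T : Finset (Fin m), (∑ j ∈ T, P j) * x i T) :=
            sum_le_sum (fun i _ => hstep1 i)
        _ = (∑ i, u i) + ∑ i, ∑ T : Finset (Fin m), (∑ j ∈ T, P j) * x i T :=
            Finset.sum_add_distrib
        _ ≤ (∑ i, u i) + (k:ℝ) * ∑ j, P j := by linarith only [hQ]
    have hUnn : 0 ≤ ∑ i, u i := sum_nonneg (fun i _ => hu0 i)
    have hWdecomp : ∑ i, v i (S i) = ∑ i, u i + ∑ i, pay i := by
      rw [← Finset.sum_add_distrib]
      apply sum_congr rfl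
      intro i _
      simp [hu]
    calc ∑ i, ∑ T : Finset (Fin m), v i T * x i T
        ≤ (∑ i, u i) + (k:ℝ) * ∑ j, P j := hOPT
      _ = (∑ i, u i) + alp * (∑ i, pay i) + (k:ℝ)*vmin/2 := by rw [hkey]; ring
      _ ≤ alp * (∑ i, u i) + alp * (∑ i, pay i) + (k:ℝ)*vmin/2 := by
          nlinarith only [hUnn, halp1]
      _ = alp * (∑ i, v i (S i)) + (k:ℝ)*vmin/2 := by rw [hWdecomp]; ring
  · -- ===== case alpha < 1 : m = 1 =====
    have hlog : Real.log A ≤ alp := by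
      have hexp := Real.add_one_le_exp (Real.log A * (1/(k:ℝ)))
      have hReq : Rr = Real.exp (Real.log A * (1/(k:ℝ))) := by
        rw [hRdef, Real.rpow_def_of_pos hA0]
      have h1 : Real.log A * (1/(k:ℝ)) + 1 ≤ Rr := by rw [hReq]; exact hexp
      have h2 : Real.log A * (1/(k:ℝ)) ≤ Rr - 1 := by linarith only [h1]
      have h3 := mul_le_mul_of_nonneg_left h2 hk'.le
      calc Real.log A = (k:ℝ) * (Real.log A * (1/(k:ℝ))) := by field_simp
        _ ≤ (k:ℝ) * (Rr - 1) := h3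
        _ = alp := rfl
    have hA3 : A ≤ 3 := by
      have h1 : Real.log A < 1 := lt_of_le_of_lt hlog halp1
      have h2 : A < Real.exp 1 := by
        calc A = Real.exp (Real.log A) := (Real.exp_log hA0).symm
          _ < Real.exp 1 := Real.exp_lt_exp.mpr h1
      have h3 : Real.exp 1 < 2.7182818286 := Real.exp_one_lt_d9
      linarith only [h2, h3]
    have hm1 : m = 1 := by
      have h1 : 2*(m:ℝ) ≤ A := by
        rw [hAdef]
        nlinarith only [hrho, hm']
      have h2 : (m:ℝ) < 2 := by linarith only [h1, hA3]
      have h3 : m < 2 := by exact_mod_cast h2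
      omega
    subst hm1
    -- pade facts
    have hp2 : 2*(A-1) ≤ alp*(A+1) := by
      have h1 := pade_log hA2 hA3
      rw [div_le_iff₀ (by linarith only [hA0] : (0:ℝ) < A+1)] at h1
      linarith only [h1,
        mul_le_mul_of_nonneg_right hlog (by linarith only [hA0] : (0:ℝ) ≤ A+1)]
    have hA1 : A*(1-alp) ≤ 1 := by
      have h1 := a_one_sub_log hA0
      nlinarith only [h1, hlog, hA0]
    have hs0 : (0:ℝ) < Rr - 1 := by linarith only [hR1]
    -- m = 1 objects
    set Fn : Finset (Fin n) := univ.filter (fun i' : Fin n => (0 : Fin 1) ∈ S i') with hFn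
    set Y : ℕ := soldCount S (0 : Fin 1) n with hY
    set Pv : ℝ := limPrice 1 k vmin vmax Y with hPv
    have hcard : Fn.card = Y := (soldCount_top S (0 : Fin 1)).symm
    have hTall : ∀ T : Finset (Fin 1), T = ∅ ∨ T = {0} := by decide
    have huniv1 : (univ : Finset (Finset (Fin 1))) = {∅, {0}} := by decide
    have hSeq : ∀ i, i ∈ Fn → S i = {0} := by
      intro i hi
      rcases hTall (S i) with h | h
      · exfalso
        rw [hFn, mem_filter] at hi
        rw [h] at hi
        simp at hi
      · exact h
    have hSempty : ∀ i, i ∉ Fn → S i = ∅ := by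
      intro i hi
      rcases hTall (S i) with h | h
      · exact h
      · exfalso
        apply hi
        rw [hFn, mem_filter]
        exact ⟨mem_univ i, by rw [h]; simp⟩
    have hpay1 : ∀ i ∈ Fn, pay i = limPrice 1 k vmin vmax (soldCount S (0:Fin 1) i) := by
      intro i hi
      rw [hpay]
      simp only
      rw [hSeq i hi, sum_singleton]
    have hccle : ∀ i : Fin n, soldCount S (0:Fin 1) i ≤ Y :=
      fun i => soldCount_mono_s10 S (0:Fin 1) (le_of_lt i.isLt)
    have hupos : ∀ i ∈ Fn, 0 < v i {0} - limPrice 1 k vmin vmax (soldCount S (0:Fin 1) i) := by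
      intro i hi
      have h := hpos i (by rw [hSeq i hi]; simp)
      rw [← hpay1 i hi, ← hSeq i hi]
      exact h
    have hvrange' : ∀ i ∈ Fn, vmin ≤ v i {0} ∧ v i {0} ≤ vmax := by
      intro i hi
      rcases hvrange i {0} with h | h
      · exfalso
        have h1 := hupos i hi
        have h2 := hppos (soldCount S (0:Fin 1) i)
        linarith only [h, h1, h2]
      · exact h
    have hvout : ∀ i, i ∉ Fn → v i {0} ≤ limPrice 1 k vmin vmax (soldCount S (0:Fin 1) i) := by
      intro i hi
      have h := hopt i {0}
      rw [hSempty i hi] at h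
      rw [hv0 i] at h
      simp only [sum_empty, sum_singleton] at h
      linarith only [h]
    have hvoutP : ∀ i, i ∉ Fn → v i {0} ≤ Pv := by
      intro i hi
      exact le_trans (hvout i hi) (hpmono (hccle i))
    -- Y ≤ k
    have hYk : Y ≤ k := by
      by_contra hYk'
      push_neg at hYk'
      have hne : Fn.Nonempty := by
        rw [← card_pos, hcard]; omega
      set i0 := Fn.max' hne with hi0
      have hi0mem : i0 ∈ Fn := Fn.max'_mem hne
      have hcc0 : soldCount S (0:Fin 1) i0 = Y - 1 := by
        rw [soldCount_eq, ← hFn]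
        rw [filter_lt_max' Fn hne, card_erase_of_mem hi0mem, hcard]
      have hbig : limPrice 1 k vmin vmax k ≤ limPrice 1 k vmin vmax (soldCount S (0:Fin 1) i0) := by
        apply hpmono
        omega
      have hpk : limPrice 1 k vmin vmax k = vmax := by
        rw [hp, hRk, hvmaxCA]
      have h8 := hupos i0 hi0mem
      have h9 := (hvrange' i0 hi0mem).2
      linarith only [h8, h9, hbig, hpk.ge, hpk.le]
    -- OPT simplification
    have hOPTeq : ∑ i, ∑ T : Finset (Fin 1), v i T * x i T = ∑ i, v i {0} * x i {0} := by
      apply sum_congr rfl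
      intro i _
      rw [huniv1, sum_pair (by decide : (∅ : Finset (Fin 1)) ≠ {0})]
      rw [hv0 i]
      ring
    have hsupply1 : ∑ i, x i {0} ≤ (k:ℝ) := by
      have h := hxsupply (0 : Fin 1)
      have hfilt : (univ.filter (fun T : Finset (Fin 1) => (0:Fin 1) ∈ T)) = {({0} : Finset (Fin 1))} := by decide
      rw [hfilt] at h
      simpa using h
    have hx1 : ∀ i, x i {0} ≤ 1 := by
      intro i
      have h := hxle i
      rw [huniv1, sum_pair (by decide : (∅ : Finset (Fin 1)) ≠ {0})] at h
      linarith only [h, hxnn i ∅]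
    have hWeq : ∑ i, v i (S i) = ∑ i ∈ Fn, v i {0} := by
      rw [← Finset.sum_filter_add_sum_filter_not univ (fun i => (0:Fin 1) ∈ S i)
        (fun i => v i (S i)), ← hFn]
      have hz : ∑ i ∈ univ.filter (fun i => ¬ ((0:Fin 1) ∈ S i)), v i (S i) = 0 := by
        apply Finset.sum_eq_zero
        intro i hi
        rw [mem_filter] at hi
        have hni : i ∉ Fn := by
          rw [hFn, mem_filter]
          tauto
        rw [hSempty i hni, hv0]
      have hfst : ∑ i ∈ Fn, v i (S i) = ∑ i ∈ Fn, v i {0} := by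
        apply sum_congr rfl
        intro i hi
        rw [hSeq i hi]
      rw [hz, hfst, add_zero]
    set Rev : ℝ := ∑ i ∈ Fn, limPrice 1 k vmin vmax (soldCount S (0:Fin 1) i) with hRevDef
    have hRev : Rev = ∑ y ∈ Finset.range Y, limPrice 1 k vmin vmax y := by
      rw [hRevDef]
      have h2 : ∀ i ∈ Fn, limPrice 1 k vmin vmax (soldCount S (0:Fin 1) i)
          = limPrice 1 k vmin vmax ((Fn.filter (fun i' : Fin n => (i':ℕ) < (i:ℕ))).card) := by
        intro i _
        rw [soldCount_eq, ← hFn]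
      rw [Finset.sum_congr rfl h2, sum_rank (fun y => limPrice 1 k vmin vmax y) Fn, hcard]
    have hPveq : Pv = C * Rr ^ Y := by rw [hPv, hp]
    have hRevPv : alp * Rev = (k:ℝ)*Pv - (k:ℝ)*C := by
      rw [hRev, hgeom Y, hPveq]
      ring
    have hvminC' : vmin = 2*C := by
      rw [hvminC]; norm_num
    have hkC : (k:ℝ)*vmin/2 = (k:ℝ)*C := by rw [hvminC']; ring
    rw [hOPTeq, hWeq]
    have hbern1 : 1 + (Y:ℝ)*(Rr-1) ≤ Rr^Y := by
      have hb := one_add_mul_le_pow (by linarith : (-2:ℝ) ≤ Rr - 1) Y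
      have e5 : (1 + (Rr-1)) = Rr := by ring
      rw [e5] at hb
      exact hb
    rcases lt_or_ge (Rr ^ Y) 2 with hcase | hcase
    · -- ===== case (a) : price below vmin =====
      have hPlt : Pv < vmin := by
        rw [hPveq, hvminC']
        nlinarith only [hcase, hC]
      have hvz : ∀ i, i ∉ Fn → v i {0} = 0 := by
        intro i hi
        rcases hvrange i {0} with h | h
        · exact h
        · exfalso
          have h6 := hvoutP i hi
          linarith only [h.1, h6, hPlt]
      have hOPTle : ∑ i, v i {0} * x i {0} ≤ ∑ i ∈ Fn, v i {0} := by
        rw [← Finset.sum_filter_add_sum_filter_not univ (fun i => (0:Fin 1) ∈ S i)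
          (fun i => v i {0} * x i {0}), ← hFn]
        have hz2 : ∑ i ∈ univ.filter (fun i => ¬ ((0:Fin 1) ∈ S i)), v i {0} * x i {0} = 0 := by
          apply Finset.sum_eq_zero
          intro i hi
          rw [mem_filter] at hi
          have hni : i ∉ Fn := by
            rw [hFn, mem_filter]; tauto
          rw [hvz i hni, zero_mul]
        rw [hz2, add_zero]
        apply sum_le_sum
        intro i hi
        have hv1 := (hvrange' i hi).1
        nlinarith only [hxnn i ({0} : Finset (Fin 1)), hx1 i,
          show (0:ℝ) ≤ v i {0} from le_trans hmin.le hv1]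
      have hYs : (Y:ℝ)*(Rr-1) ≤ 1 := by linarith only [hbern1, hcase]
      have hYA : ((1-alp)*Y*A)*(Rr-1) ≤ (k:ℝ)*(Rr-1) := by
        have hnn : 0 ≤ (1-alp)*A :=
          mul_nonneg (by linarith only [halp1] : (0:ℝ) ≤ 1-alp) hA0.le
        calc ((1-alp)*Y*A)*(Rr-1) = ((1-alp)*A)*((Y:ℝ)*(Rr-1)) := by ring
          _ ≤ ((1-alp)*A)*1 := mul_le_mul_of_nonneg_left hYs hnn
          _ = (1-alp)*A := mul_one _
          _ ≤ alp := by linarith only [hp2, hA2]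
          _ = (k:ℝ)*(Rr-1) := halp
      have hYA' : (1-alp)*Y*A ≤ k := le_of_mul_le_mul_right hYA hs0
      have hWle : ∑ i ∈ Fn, v i {0} ≤ (Y:ℝ)*vmax := by
        calc ∑ i ∈ Fn, v i {0} ≤ ∑ i ∈ Fn, vmax := sum_le_sum (fun i hi => (hvrange' i hi).2)
          _ = (Fn.card : ℝ) * vmax := by rw [sum_const, nsmul_eq_mul]
          _ = (Y:ℝ)*vmax := by rw [hcard]
      have hfin : (1-alp)*(∑ i ∈ Fn, v i {0}) ≤ (k:ℝ)*C := by
        calc (1-alp)*(∑ i ∈ Fn, v i {0}) ≤ (1-alp)*((Y:ℝ)*vmax) :=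
              mul_le_mul_of_nonneg_left hWle (by linarith)
          _ = ((1-alp)*Y*A)*C := by rw [hvmaxCA]; ring
          _ ≤ (k:ℝ)*C := mul_le_mul_of_nonneg_right hYA' hC.le
      rw [hkC]
      linarith only [hOPTle, hfin]
    · -- ===== case (b) : price at least vmin =====
      have hPvpos : 0 < Pv := hppos Y
      set Gc : Finset (Fin n) := univ.filter (fun i => ¬ ((0:Fin 1) ∈ S i)) with hGc
      have hsplitx : ∑ i, v i {0} * x i {0}
          = ∑ i ∈ Fn, v i {0} * x i {0} + ∑ i ∈ Gc, v i {0} * x i {0} := by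
        rw [← Finset.sum_filter_add_sum_filter_not univ (fun i => (0:Fin 1) ∈ S i)
          (fun i => v i {0} * x i {0}), ← hFn, ← hGc]
      set Xb : ℝ := ∑ i ∈ Fn, x i {0} with hXb
      have hnotmem : ∀ i ∈ Gc, i ∉ Fn := by
        intro i hi
        rw [hGc, mem_filter] at hi
        rw [hFn, mem_filter]
        tauto
      have hout : ∑ i ∈ Gc, v i {0} * x i {0} ≤ Pv * ((k:ℝ) - Xb) := by
        have h1 : ∑ i ∈ Gc, v i {0} * x i {0} ≤ ∑ i ∈ Gc, Pv * x i {0} := by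
          apply sum_le_sum
          intro i hi
          exact mul_le_mul_of_nonneg_right (hvoutP i (hnotmem i hi)) (hxnn i {0})
        have h2 : ∑ i ∈ Gc, Pv * x i {0} = Pv * ∑ i ∈ Gc, x i {0} := (Finset.mul_sum _ _ _).symm
        have h3 : ∑ i ∈ Gc, x i {0} ≤ (k:ℝ) - Xb := by
          have h4 := Finset.sum_filter_add_sum_filter_not univ (fun i => (0:Fin 1) ∈ S i)
            (fun i => x i {0})
          rw [← hFn, ← hGc] at h4
          linarith only [h4, hsupply1]
        calc ∑ i ∈ Gc, v i {0} * x i {0} ≤ Pv * ∑ i ∈ Gc, x i {0} := by rw [← h2]; exact h1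
          _ ≤ Pv * ((k:ℝ) - Xb) := mul_le_mul_of_nonneg_left h3 hPvpos.le
      have hterm : ∀ i ∈ Fn,
          v i {0} * x i {0} - Pv * x i {0}
              - alp*(v i {0} - limPrice 1 k vmin vmax (soldCount S (0:Fin 1) i))
          ≤ max ((vmax - Pv) - alp*(vmax - limPrice 1 k vmin vmax (soldCount S (0:Fin 1) i)))
                (-(alp*(vmin - limPrice 1 k vmin vmax (soldCount S (0:Fin 1) i)))) := by
        intro i hi
        obtain ⟨hv1, hv2⟩ := hvrange' i hi
        have hx0 := hxnn i ({0} : Finset (Fin 1))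
        have hx1' := hx1 i
        rcases le_or_gt Pv (v i {0}) with hc | hc
        · apply le_trans _ (le_max_left _ _)
          have h1 : (v i {0} - Pv) * x i {0} ≤ (v i {0} - Pv) * 1 :=
            mul_le_mul_of_nonneg_left hx1' (by linarith)
          linarith only [h1, mul_nonneg (by linarith only [halp1] : (0:ℝ) ≤ 1 - alp)
            (by linarith only [hv2] : (0:ℝ) ≤ vmax - v i {0})]
        · apply le_trans _ (le_max_right _ _)
          have h1 : (v i {0} - Pv) * x i {0} ≤ 0 :=
            mul_nonpos_of_nonpos_of_nonneg (by linarith) hx0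
          linarith only [h1, mul_le_mul_of_nonneg_left hv1 halp0.le]
      have hsum_eq : ∑ i ∈ Fn, (v i {0} * x i {0} - Pv * x i {0}
            - alp*(v i {0} - limPrice 1 k vmin vmax (soldCount S (0:Fin 1) i)))
          = (∑ i ∈ Fn, v i {0} * x i {0}) - Pv * Xb
              - alp * (∑ i ∈ Fn, v i {0}) + alp * Rev := by
        rw [Finset.sum_sub_distrib, Finset.sum_sub_distrib, ← Finset.mul_sum, ← Finset.mul_sum,
          Finset.sum_sub_distrib]
        rw [hXb, hRevDef]
        ring
      have hκsum : ∑ i ∈ Fn, (v i {0} * x i {0} - Pv * x i {0}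
            - alp*(v i {0} - limPrice 1 k vmin vmax (soldCount S (0:Fin 1) i))) ≤ 0 := by
        have hstep := Finset.sum_le_sum hterm
        rcases le_or_gt Pv ((1-alp)*vmax + alp*vmin) with hκ | hκ
        · -- G branch
          have hmx : ∀ i ∈ Fn,
              max ((vmax - Pv) - alp*(vmax - limPrice 1 k vmin vmax (soldCount S (0:Fin 1) i)))
                  (-(alp*(vmin - limPrice 1 k vmin vmax (soldCount S (0:Fin 1) i))))
              = (vmax - Pv) - alp*(vmax - limPrice 1 k vmin vmax (soldCount S (0:Fin 1) i)) := by
            intro i hi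
            apply max_eq_left
            linarith only [hκ]
          have hbern2 : ((k:ℝ)-(Y:ℝ))*(Rr-1)*(Rr^Y) ≤ A - Rr^Y := by
            have h5 := one_add_mul_le_pow (by linarith : (-2:ℝ) ≤ Rr - 1) (k - Y)
            have e5 : (1 + (Rr-1)) = Rr := by ring
            rw [e5] at h5
            have hcast : (((k - Y : ℕ)):ℝ) = (k:ℝ) - (Y:ℝ) := by
              rw [Nat.cast_sub hYk]
            rw [hcast] at h5
            have hsplitpow : Rr^Y * Rr^(k-Y) = A := by
              rw [← pow_add, Nat.add_sub_cancel' hYk, hRk]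
            have hRYpos : (0:ℝ) < Rr^Y := by positivity
            have hmul := mul_le_mul_of_nonneg_left h5 hRYpos.le
            calc ((k:ℝ)-(Y:ℝ))*(Rr-1)*(Rr^Y)
                = Rr^Y * (1 + ((k:ℝ)-(Y:ℝ))*(Rr-1)) - Rr^Y := by ring
              _ ≤ Rr^Y * Rr^(k-Y) - Rr^Y := by linarith only [hmul]
              _ = A - Rr^Y := by rw [hsplitpow]
          have hIQ := IQ1 hs0 halp halp1 hbern1 hbern2 hcase hA1 hp2 hA0.le
          have hGsum : ∑ i ∈ Fn, ((vmax - Pv)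
              - alp*(vmax - limPrice 1 k vmin vmax (soldCount S (0:Fin 1) i))) ≤ 0 := by
            have he' : ∀ i ∈ Fn, (vmax - Pv)
                - alp*(vmax - limPrice 1 k vmin vmax (soldCount S (0:Fin 1) i))
                = ((vmax - Pv) - alp*vmax)
                  + alp * limPrice 1 k vmin vmax (soldCount S (0:Fin 1) i) := by
              intro i _
              ring
            have he : ∑ i ∈ Fn, ((vmax - Pv)
                - alp*(vmax - limPrice 1 k vmin vmax (soldCount S (0:Fin 1) i)))
                = (Y:ℝ)*(vmax - Pv) - alp*((Y:ℝ)*vmax) + alp*Rev := by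
              rw [Finset.sum_congr rfl he', Finset.sum_add_distrib, Finset.sum_const, hcard,
                nsmul_eq_mul, ← Finset.mul_sum, ← hRevDef]
              ring
            have he2 : (Y:ℝ)*(vmax - Pv) - alp*((Y:ℝ)*vmax) + alp*Rev
                = C*(((1-alp)*Y*A + ((k:ℝ)-(Y:ℝ))*(Rr^Y)) - k) := by
              rw [hRevPv, hvmaxCA, hPveq]
              ring
            rw [he, he2]
            apply mul_nonpos_of_nonneg_of_nonpos hC.le
            linarith only [hIQ]
          calc ∑ i ∈ Fn, (v i {0} * x i {0} - Pv * x i {0}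
                - alp*(v i {0} - limPrice 1 k vmin vmax (soldCount S (0:Fin 1) i)))
              ≤ ∑ i ∈ Fn,
                max ((vmax - Pv) - alp*(vmax - limPrice 1 k vmin vmax (soldCount S (0:Fin 1) i)))
                    (-(alp*(vmin - limPrice 1 k vmin vmax (soldCount S (0:Fin 1) i)))) := hstep
            _ = ∑ i ∈ Fn, ((vmax - Pv)
                - alp*(vmax - limPrice 1 k vmin vmax (soldCount S (0:Fin 1) i))) :=
                  Finset.sum_congr rfl hmx
            _ ≤ 0 := hGsum
        · -- b branch
          have hmx : ∀ i ∈ Fn,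
              max ((vmax - Pv) - alp*(vmax - limPrice 1 k vmin vmax (soldCount S (0:Fin 1) i)))
                  (-(alp*(vmin - limPrice 1 k vmin vmax (soldCount S (0:Fin 1) i))))
              = -(alp*(vmin - limPrice 1 k vmin vmax (soldCount S (0:Fin 1) i))) := by
            intro i hi
            apply max_eq_right
            linarith only [hκ]
          have hsY : (Rr-1)*(Y:ℝ) ≤ 1 := by
            have h6 : (Rr-1)*(Y:ℝ) ≤ (Rr-1)*(k:ℝ) :=
              mul_le_mul_of_nonneg_left (by exact_mod_cast Nat.cast_le.mpr hYk) hs0.le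
            have h7 : (Rr-1)*(k:ℝ) = alp := by rw [halp]; ring
            linarith only [h6, h7, halp1]
          have hIQ2 := IQ2 hs0.le Y hsY
          have e5 : (1 + (Rr-1)) = Rr := by ring
          rw [e5] at hIQ2
          have h7 : alp*Rev = (k:ℝ)*C*(Rr^Y - 1) := by
            rw [hRevPv, hPveq]; ring
          have h6 : alp*Rev ≤ alp*((Y:ℝ)*vmin) := by
            rw [h7, hvminC']
            have h8 : Rr^Y - 1 ≤ 2*((Rr-1)*(Y:ℝ)) := by linarith only [hIQ2]
            have h9 : (k:ℝ)*C*(Rr^Y-1) ≤ (k:ℝ)*C*(2*((Rr-1)*(Y:ℝ))) := by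
              apply mul_le_mul_of_nonneg_left h8 (by positivity)
            calc (k:ℝ)*C*(Rr^Y-1) ≤ (k:ℝ)*C*(2*((Rr-1)*(Y:ℝ))) := h9
              _ = alp*((Y:ℝ)*(2*C)) := by rw [halp]; ring
          have hRevle : Rev ≤ (Y:ℝ)*vmin := le_of_mul_le_mul_left h6 halp0
          have hbsum : ∑ i ∈ Fn,
              (-(alp*(vmin - limPrice 1 k vmin vmax (soldCount S (0:Fin 1) i)))) ≤ 0 := by
            have he : ∑ i ∈ Fn,
                (-(alp*(vmin - limPrice 1 k vmin vmax (soldCount S (0:Fin 1) i))))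
                = -(alp*((Y:ℝ)*vmin - Rev)) := by
              rw [Finset.sum_neg_distrib, ← Finset.mul_sum, Finset.sum_sub_distrib,
                Finset.sum_const, hcard, nsmul_eq_mul, hRevDef]
            rw [he]
            have h10 : 0 ≤ alp*((Y:ℝ)*vmin - Rev) :=
              mul_nonneg halp0.le (by linarith only [hRevle])
            linarith only [h10]
          calc ∑ i ∈ Fn, (v i {0} * x i {0} - Pv * x i {0}
                - alp*(v i {0} - limPrice 1 k vmin vmax (soldCount S (0:Fin 1) i)))
              ≤ ∑ i ∈ Fn,
                max ((vmax - Pv) - alp*(vmax - limPrice 1 k vmin vmax (soldCount S (0:Fin 1) i)))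
                    (-(alp*(vmin - limPrice 1 k vmin vmax (soldCount S (0:Fin 1) i)))) := hstep
            _ = ∑ i ∈ Fn,
                (-(alp*(vmin - limPrice 1 k vmin vmax (soldCount S (0:Fin 1) i)))) :=
                  Finset.sum_congr rfl hmx
            _ ≤ 0 := hbsum
      -- assemble case (b)
      have hinner : ∑ i ∈ Fn, v i {0} * x i {0}
          ≤ Pv * Xb + alp * (∑ i ∈ Fn, v i {0}) - alp * Rev := by
        linarith only [hκsum, hsum_eq.le, hsum_eq.ge]
      rw [hsplitx, hkC]
      have hfinal : (k:ℝ)*Pv - alp*Rev = (k:ℝ)*C := by linarith only [hRevPv]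
      linarith only [hout, hinner, hfinal]
end

section
/- In the limited-supply setting with k units of each of m items, values in {0} ∪ [v_min, v_max], ρ = v_max/v_min, r = (2mρ)^{1/k}, and pricing function p(y) = (v_min/(2m))·r^y, the posted-price mechanism M_p never sells more than k units of any item: at termination, the total number of units sold of each item j is at most k. -/
open Finset

theorem soldCount_self {m n : ℕ} (S : Fin n → Finset (Fin m)) (j : Fin m) :
    soldCount S j n = #{i | j ∈ S i} := by
  simp [soldCount]

theorem exists_mem_le_soldCount {m n k : ℕ} (S : Fin n → Finset (Fin m)) (j : Fin m)
    (h : k < soldCount S j n) : ∃ i : Fin n, j ∈ S i ∧ k ≤ soldCount S j i := by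
  rw [soldCount_self] at h
  obtain ⟨B, hB, hBcard⟩ := exists_subset_card_eq (s := {i | j ∈ S i}) h
  have hBne : B.Nonempty := card_pos.mp (by omega)
  have hmax : B.max' hBne ∈ B := B.max'_mem hBne
  refine ⟨B.max' hBne, (mem_filter.mp (hB hmax)).2, ?_⟩
  have hearlier : B.erase (B.max' hBne) ⊆
      ({i | i < B.max' hBne ∧ j ∈ S i} : Finset (Fin n)) := by
    intro b hb
    obtain ⟨hne, hbB⟩ := mem_erase.mp hb
    simpa [lt_of_le_of_ne (B.le_max' b hbB) hne] using hB hbB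
  calc k = #(B.erase (B.max' hBne)) := by simp [card_erase_of_mem hmax, hBcard]
    _ ≤ soldCount S j (B.max' hBne) := card_le_card hearlier

section limPrice

variable {m k : ℕ} {vmin vmax : ℝ}

theorem limPrice_nonneg (hmin : 0 ≤ vmin) (hmax : 0 ≤ vmax) (y : ℕ) :
    0 ≤ limPrice m k vmin vmax y := by
  unfold limPrice
  positivity

theorem limPrice_self (hm : m ≠ 0) (hk : k ≠ 0) (hmin : 0 < vmin) (hmax : 0 ≤ vmax) :
    limPrice m k vmin vmax k = vmax := by
  unfold limPrice
  rw [one_div, Real.rpow_inv_natCast_pow (by positivity) hk]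
  field_simp

theorem limPrice_monotone (hm : 0 < m) (hmin : 0 < vmin) (hle : vmin ≤ vmax) :
    Monotone (limPrice m k vmin vmax) := by
  have hρ : 1 ≤ vmax / vmin := (one_le_div hmin).mpr hle
  have hm1 : (1 : ℝ) ≤ m := by exact_mod_cast hm
  have hbase : 1 ≤ 2 * (m : ℝ) * (vmax / vmin) := by nlinarith
  exact (pow_right_mono₀ (Real.one_le_rpow hbase (by positivity))).const_mul (by positivity)

theorem vmax_le_limPrice (hm : 0 < m) (hk : 0 < k) (hmin : 0 < vmin) (hle : vmin ≤ vmax)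
    {y : ℕ} (hy : k ≤ y) : vmax ≤ limPrice m k vmin vmax y :=
  (limPrice_self hm.ne' hk.ne' hmin (hmin.le.trans hle)).symm.le.trans
    (limPrice_monotone hm hmin hle hy)

end limPrice

theorem lt_of_sub_sum_pos {ι : Type*} {s : Finset ι} {p : ι → ℝ} {a : ℝ} {j : ι}
    (hp : ∀ i ∈ s, 0 ≤ p i) (hj : j ∈ s) (h : 0 < a - ∑ i ∈ s, p i) : p j < a := by
  linarith [single_le_sum hp hj]

theorem stmt11_general (m k n : ℕ) (vmin vmax : ℝ)
    (hm : 0 < m) (hk : 0 < k) (hmin : 0 < vmin) (hle : vmin ≤ vmax)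
    (v : Fin n → Finset (Fin m) → ℝ)
    (hvrange : ∀ i T, v i T = 0 ∨ (vmin ≤ v i T ∧ v i T ≤ vmax))
    (S : Fin n → Finset (Fin m))
    (hpos : ∀ i : Fin n, S i ≠ ∅ →
      0 < v i (S i) - ∑ j ∈ S i, limPrice m k vmin vmax (soldCount S j i)) :
    ∀ j : Fin m, soldCount S j n ≤ k := by
  intro j
  by_contra! hsold
  obtain ⟨i, hji, hki⟩ := exists_mem_le_soldCount S j hsold
  have hprice : vmax ≤ limPrice m k vmin vmax (soldCount S j i) :=
    vmax_le_limPrice hm hk hmin hle hki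
  have hvalue : v i (S i) ≤ vmax :=
    (hvrange i (S i)).elim (fun h0 => h0 ▸ hmin.le.trans hle) And.right
  have hcheaper := lt_of_sub_sum_pos (fun j' _ => limPrice_nonneg hmin.le (hmin.le.trans hle) _)
    hji (hpos i (ne_empty_of_mem hji))
  linarith

/-- in the limited-supply setting (`k` units of each of `m` items, values
in `{0} ∪ [v_min, v_max]`), the posted-price mechanism with pricing function
`p(y) = (v_min/(2m))·(2mρ)^(y/k)` never sells more than `k` units of any item: at
termination, at most `k` units of each item `j` have been sold. -/
theorem stmt11 (m k n : ℕ) (vmin vmax : ℝ)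
    (hm : 0 < m) (hk : 0 < k) (hmin : 0 < vmin) (hle : vmin ≤ vmax)
    (v : Fin n → Finset (Fin m) → ℝ)
    (hv0 : ∀ i, v i ∅ = 0)
    (hvrange : ∀ i T, v i T = 0 ∨ (vmin ≤ v i T ∧ v i T ≤ vmax))
    (S : Fin n → Finset (Fin m))
    (hopt : ∀ i : Fin n, ∀ T : Finset (Fin m),
      v i (S i) - ∑ j ∈ S i, limPrice m k vmin vmax (soldCount S j i) ≥
        v i T - ∑ j ∈ T, limPrice m k vmin vmax (soldCount S j i))
    (hpos : ∀ i : Fin n, S i ≠ ∅ →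
      0 < v i (S i) - ∑ j ∈ S i, limPrice m k vmin vmax (soldCount S j i)) :
    ∀ j : Fin m, soldCount S j n ≤ k :=
  stmt11_general m k n vmin vmax hm hk hmin hle v hvrange S hpos
end

section
/- Let f : [0,∞) → [0,∞) be nondecreasing, let α ≥ 1 and β ∈ ℝ, and let f*(v) := sup_{z ≥ 0} (v·z − f(z)). Call a nondecreasing function y : [0,∞) → [0,∞) feasible if for every v* ≥ 0: v*·y(v*) − ∫₀^{v*} y(v) dv − f(y(v*)) ≥ (1/α)·f*(v*) − β. If the set of feasible functions is nonempty, then the pointwise infimum ȳ(v) := inf { y(v) : y feasible } is nondecreasing and feasible. -/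
/-- A nondecreasing nonnegative function `y : [0,∞) → [0,∞)` is feasible (for cost `f`,
ratio `α`, and additive constant `β`) if for every `v* ≥ 0`:
`v*·y(v*) − ∫₀^{v*} y(v) dv − f(y(v*)) ≥ (1/α)·f*(v*) − β`. -/
def Feasible (f : ℝ → ℝ) (α β : ℝ) (y : ℝ → ℝ) : Prop :=
  MonotoneOn y (Set.Ici 0) ∧ (∀ v ≥ (0:ℝ), 0 ≤ y v) ∧
    ∀ v ≥ (0:ℝ), v * y v - (∫ t in (0:ℝ)..v, y t) - f (y v) ≥ (1/α) * conj f v - β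

/-- if some feasible function exists, then the pointwise infimum of all
feasible functions is nondecreasing and itself feasible. -/
theorem stmt13 (f : ℝ → ℝ) (α β : ℝ)
    (hfmono : MonotoneOn f (Set.Ici 0)) (hfnn : ∀ v ≥ (0:ℝ), 0 ≤ f v)
    (hα : 1 ≤ α)
    (hne : ∃ y : ℝ → ℝ, Feasible f α β y) :
    MonotoneOn (fun v => sInf {w : ℝ | ∃ y : ℝ → ℝ, Feasible f α β y ∧ y v = w})
      (Set.Ici 0) ∧
    Feasible f α β (fun v => sInf {w : ℝ | ∃ y : ℝ → ℝ, Feasible f α β y ∧ y v = w}) := by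
  obtain ⟨y0, hy0⟩ := hne
  set Y : ℝ → ℝ := fun v => sInf {w : ℝ | ∃ y : ℝ → ℝ, Feasible f α β y ∧ y v = w} with hYdef
  have hSne : ∀ v : ℝ, {w : ℝ | ∃ y : ℝ → ℝ, Feasible f α β y ∧ y v = w}.Nonempty :=
    fun v => ⟨y0 v, y0, hy0, rfl⟩
  have hSbdd : ∀ v ≥ (0:ℝ), BddBelow {w : ℝ | ∃ y : ℝ → ℝ, Feasible f α β y ∧ y v = w} := by
    intro v hv
    exact ⟨0, fun w hw => by obtain ⟨y, hy, rfl⟩ := hw; exact hy.2.1 v hv⟩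
  have hYle : ∀ v ≥ (0:ℝ), ∀ y : ℝ → ℝ, Feasible f α β y → Y v ≤ y v := by
    intro v hv y hy
    exact csInf_le (hSbdd v hv) ⟨y, hy, rfl⟩
  have hYnn : ∀ v ≥ (0:ℝ), 0 ≤ Y v := by
    intro v hv
    exact le_csInf (hSne v) (fun w hw => by obtain ⟨y, hy, rfl⟩ := hw; exact hy.2.1 v hv)
  have hYmono : MonotoneOn Y (Set.Ici 0) := by
    intro a ha b hb hab
    apply le_csInf (hSne b)
    rintro w ⟨y, hy, rfl⟩
    exact (hYle a ha y hy).trans (hy.1 ha hb hab)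
  refine ⟨hYmono, hYmono, hYnn, ?_⟩
  intro v hv
  rw [ge_iff_le]
  apply le_of_forall_pos_le_add
  intro ε' hε'
  have hv1 : (0:ℝ) < v + 1 := by linarith [(hv : (0:ℝ) ≤ v)]
  have hε : 0 < ε' / (v + 1) := div_pos hε' hv1
  obtain ⟨w, hwmem, hw⟩ := Real.lt_sInf_add_pos (hSne v) hε
  obtain ⟨y, hy, rfl⟩ := hwmem
  have hle : ∀ t ∈ Set.Icc (0:ℝ) v, Y t ≤ y t := fun t ht => hYle t ht.1 y hy
  have hsub : Set.uIcc (0:ℝ) v ⊆ Set.Ici 0 := by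
    rw [Set.uIcc_of_le hv]; exact fun t ht => ht.1
  have hyint : IntervalIntegrable y MeasureTheory.volume 0 v :=
    (hy.1.mono hsub).intervalIntegrable
  have hYint : IntervalIntegrable Y MeasureTheory.volume 0 v :=
    (hYmono.mono hsub).intervalIntegrable
  have hint : (∫ t in (0:ℝ)..v, Y t) ≤ ∫ t in (0:ℝ)..v, y t :=
    intervalIntegral.integral_mono_on hv hYint hyint hle
  have hfle : f (Y v) ≤ f (y v) :=
    hfmono (Set.mem_Ici.mpr (hYnn v hv)) (Set.mem_Ici.mpr (hy.2.1 v hv)) (hYle v hv y hy)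
  have h1 := hy.2.2 v hv
  have hmul : v * y v ≤ v * Y v + v * (ε' / (v + 1)) := by
    have := mul_le_mul_of_nonneg_left hw.le (hv : (0:ℝ) ≤ v)
    linarith [this, mul_add v (Y v) (ε' / (v + 1))]
  have hvε : v * (ε' / (v + 1)) ≤ ε' := by
    have h2 : v * (ε' / (v + 1)) ≤ (v + 1) * (ε' / (v + 1)) :=
      mul_le_mul_of_nonneg_right (by linarith) hε.le
    have h3 : (v + 1) * (ε' / (v + 1)) = ε' := by field_simp
    linarith
  linarith [h1, hint, hfle, hmul, hvε]
end

section
/- Let f : [0,∞) → [0,∞) be strictly convex, differentiable, and nondecreasing, let α ≥ 1 and β ∈ ℝ, and let f*(v) := sup_{z ≥ 0} (v·z − f(z)); assume f* is strictly increasing on [0,∞). If a nondecreasing function y : [0,∞) → [0,∞) satisfies, for every v* ≥ 0, the equality v*·y(v*) − ∫₀^{v*} y(v) dv − f(y(v*)) = (1/α)·f*(v*) − β, then y is strictly increasing on [0,∞). -/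
/-- for a strictly convex, differentiable, nondecreasing cost `f` whose
conjugate `f*` is strictly increasing on `[0,∞)`, any nondecreasing nonnegative
`y : [0,∞) → [0,∞)` satisfying the feasibility condition with equality,
`v*·y(v*) − ∫₀^{v*} y(v) dv − f(y(v*)) = (1/α)·f*(v*) − β` for every `v* ≥ 0`,
is strictly increasing on `[0,∞)`. -/
theorem stmt15 (f : ℝ → ℝ) (α β : ℝ)
    (hfconv : StrictConvexOn ℝ (Set.Ici 0) f)
    (hfdiff : DifferentiableOn ℝ f (Set.Ici 0))
    (hfmono : MonotoneOn f (Set.Ici 0)) (hfnn : ∀ v ≥ (0:ℝ), 0 ≤ f v)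
    (hα : 1 ≤ α)
    (hconjmono : StrictMonoOn (conj f) (Set.Ici 0))
    (y : ℝ → ℝ)
    (hymono : MonotoneOn y (Set.Ici 0)) (hynn : ∀ v ≥ (0:ℝ), 0 ≤ y v)
    (heq : ∀ v ≥ (0:ℝ),
      v * y v - (∫ t in (0:ℝ)..v, y t) - f (y v) = (1/α) * conj f v - β) :
    StrictMonoOn y (Set.Ici 0) := by
  intro a ha b hb hab
  rcases lt_or_eq_of_le (hymono ha hb hab.le) with h | h
  · exact h
  exfalso
  have ha' : (0:ℝ) ≤ a := ha
  have hb' : (0:ℝ) ≤ b := hb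
  -- y is constant equal to y a on [a, b]
  have hconst : ∀ t ∈ Set.Icc a b, y t = y a := by
    intro t ht
    have ht0 : t ∈ Set.Ici (0:ℝ) := le_trans ha' ht.1
    exact le_antisymm (h ▸ hymono ht0 hb ht.2) (hymono ha ht0 ht.1)
  -- integrability
  have hint1 : IntervalIntegrable y MeasureTheory.volume 0 a := by
    apply MonotoneOn.intervalIntegrable
    exact hymono.mono (by rw [Set.uIcc_of_le ha']; exact Set.Icc_subset_Ici_self)
  have hint2 : IntervalIntegrable y MeasureTheory.volume a b := by
    apply MonotoneOn.intervalIntegrable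
    refine hymono.mono ?_
    rw [Set.uIcc_of_le hab.le]
    exact fun t ht => le_trans ha' ht.1
  have hsplit : (∫ t in (0:ℝ)..b, y t)
      = (∫ t in (0:ℝ)..a, y t) + ∫ t in a..b, y t :=
    (intervalIntegral.integral_add_adjacent_intervals hint1 hint2).symm
  have hab_int : (∫ t in a..b, y t) = (b - a) * y a := by
    have : (∫ t in a..b, y t) = ∫ _ in a..b, y a := by
      apply intervalIntegral.integral_congr
      rw [Set.uIcc_of_le hab.le]
      exact hconst
    rw [this, intervalIntegral.integral_const, smul_eq_mul]
  have hc : conj f a < conj f b := hconjmono ha hb hab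
  have hαpos : (0:ℝ) < 1/α := by positivity
  have e1 := heq a ha'
  have e2 := heq b hb'
  rw [hsplit, hab_int, ← h] at e2
  have key : (1/α) * conj f b - (1/α) * conj f a = 0 := by linarith
  nlinarith [key, hc, hαpos]
end

section
/- Let c : [0,∞) → [0,∞) be nondecreasing, concave, and differentiable with convex derivative c′. Then there exists a continuous, nondecreasing, concave, piecewise-linear function g : [0,∞) → ℝ such that for every integer i ≥ 0: ∫_i^{i+1} g(t) dt = c(i+1). -/
/-!
Put `e i = c (i + 2) - c (i + 1)` and take `g` linear on `[i, i + 1]`, rising from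
`c (i + 1) - δ i` to `c (i + 1) + δ i`: its integral over `[i, i + 1]` is `c (i + 1)`, and it is
continuous at the nodes exactly when `δ (i + 1) = e i - δ i`. Its slopes are `2 δ i`, so `g` is
concave and nondecreasing as soon as `δ ≥ 0` is nonincreasing, which follows from `e i / 2 ≤ δ i`
for all `i`. Concavity of `c` makes `e` nonincreasing and convexity of `c'` makes `e` discretely
convex; then the constraints `e i / 2 ≤ δ i` on the initial value `δ 0` form a nested sequence of
intervals (even `i` bound it from below, odd `i` from above), whose intersection is nonempty.
-/

open Set

lemma ConvexOn.two_mul_le_add {s : Set ℝ} {f : ℝ → ℝ} (hf : ConvexOn ℝ s f) {x : ℝ} (hx : x ∈ s)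
    (hx' : x + 2 ∈ s) : 2 * f (x + 1) ≤ f x + f (x + 2) := by
  have := hf.2 hx hx' (by norm_num : (0 : ℝ) ≤ 1 / 2) (by norm_num : (0 : ℝ) ≤ 1 / 2) (by norm_num)
  rw [show (1 / 2 : ℝ) • x + (1 / 2 : ℝ) • (x + 2) = x + 1 by simp only [smul_eq_mul]; ring] at this
  simp only [smul_eq_mul] at this
  linarith

lemma ConcaveOn.add_le_two_mul {s : Set ℝ} {f : ℝ → ℝ} (hf : ConcaveOn ℝ s f) {x : ℝ}
    (hx : x ∈ s) (hx' : x + 2 ∈ s) : f x + f (x + 2) ≤ 2 * f (x + 1) := by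
  have := hf.neg.two_mul_le_add hx hx'
  simp only [Pi.neg_apply] at this
  linarith

lemma monotoneOn_secondDiff_of_convexOn_deriv {f f' : ℝ → ℝ}
    (hf : ∀ x ≥ (0 : ℝ), HasDerivWithinAt f (f' x) (Ici 0) x) (hf' : ConvexOn ℝ (Ici 0) f') :
    MonotoneOn (fun t => f (t + 2) - 2 * f (t + 1) + f t) (Ici 0) := by
  have hshift : ∀ a ≥ (0 : ℝ), ∀ x > (0 : ℝ), HasDerivAt (fun t => f (t + a)) (f' (x + a)) x :=
    fun a ha x hx => HasDerivAt.comp_add_const x a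
      ((hf _ (by linarith)).hasDerivAt (Ici_mem_nhds (by linarith)))
  have hf_cont : ContinuousOn f (Ici 0) := fun x hx => (hf x hx).continuousWithinAt
  have hcont : ∀ a ≥ (0 : ℝ), ContinuousOn (fun t => f (t + a)) (Ici 0) := fun a ha =>
    hf_cont.comp (continuousOn_id.add continuousOn_const) fun t (ht : (0 : ℝ) ≤ t) => by
      simp only [mem_Ici]; linarith
  refine monotoneOn_of_hasDerivWithinAt_nonneg (f' := fun x => f' (x + 2) - 2 * f' (x + 1) + f' x)
    (convex_Ici 0) (((hcont 2 (by norm_num)).sub (continuousOn_const.mul (hcont 1 (by norm_num)))).add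
      hf_cont) (fun x hx => ?_) (fun x hx => ?_)
  · rw [interior_Ici] at hx
    have h0 := hshift 0 le_rfl x hx
    simp only [add_zero] at h0
    exact (((hshift 2 (by norm_num) x hx).sub ((hshift 1 (by norm_num) x hx).const_mul 2)).add
      h0).hasDerivWithinAt
  · rw [interior_Ici] at hx
    have hx0 : (0 : ℝ) ≤ x := le_of_lt hx
    have := hf'.two_mul_le_add (mem_Ici.2 hx0) (mem_Ici.2 (by linarith))
    linarith

def alternatingRec (e : ℕ → ℝ) (x : ℝ) : ℕ → ℝ
  | 0 => x
  | n + 1 => e n - alternatingRec e x n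

lemma alternatingRec_eq (e : ℕ → ℝ) (x : ℝ) (n : ℕ) :
    alternatingRec e x n = alternatingRec e 0 n + (-1) ^ n * x := by
  induction n with
  | zero => simp [alternatingRec]
  | succ n ih => rw [alternatingRec, alternatingRec, ih, pow_succ]; ring

lemma exists_half_le_alternatingRec {e : ℕ → ℝ} (he : Antitone e)
    (hconv : ∀ i, 2 * e (i + 1) ≤ e i + e (i + 2)) :
    ∃ x, ∀ n, e n / 2 ≤ alternatingRec e x n := by
  set d := alternatingRec e 0
  have hdx : ∀ x n, alternatingRec e x n = d n + (-1) ^ n * x := alternatingRec_eq e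
  have hd : ∀ n, d (n + 1) = e n - d n := fun _ => rfl
  set lo : ℕ → ℝ := fun k => e (2 * k) / 2 - d (2 * k)
  set hi : ℕ → ℝ := fun k => d (2 * k + 1) - e (2 * k + 1) / 2
  have hlo : Monotone lo := monotone_nat_of_le_succ fun k => by
    have := hconv (2 * k)
    simp only [lo, Nat.mul_succ, hd]
    linarith
  have hhi : Antitone hi := antitone_nat_of_succ_le fun k => by
    have := hconv (2 * k + 1)
    simp only [hi, Nat.mul_succ, hd]
    linarith
  have hlohi : lo ≤ hi := fun k => by
    have := he (2 * k).le_succ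
    simp only [lo, hi, hd]
    linarith
  obtain ⟨x, hx⟩ : ∃ x, ∀ k, lo k ≤ x ∧ x ≤ hi k :=
    ⟨_, fun k => mem_iInter.1 (hlo.ciSup_mem_iInter_Icc_of_antitone hhi hlohi) k⟩
  -- for `n = 2 k` the bound `e n / 2 ≤ alternatingRec e x n` reads `lo k ≤ x`, for `n = 2 k + 1`
  -- it reads `x ≤ hi k`
  refine ⟨x, fun n => ?_⟩
  rw [hdx]
  obtain ⟨k, rfl | rfl⟩ := Nat.even_or_odd' n
  · rw [(even_two_mul k).neg_one_pow]
    have := (hx k).1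
    simp only [lo] at this
    linarith
  · rw [(odd_two_mul_add_one k).neg_one_pow]
    have := (hx k).2
    simp only [hi] at this
    linarith

lemma alternatingRec_antitone {e : ℕ → ℝ} {x : ℝ} (h : ∀ n, e n / 2 ≤ alternatingRec e x n) :
    Antitone (alternatingRec e x) :=
  antitone_nat_of_succ_le fun n => by rw [alternatingRec]; linarith [h n]

section PiecewiseLinear

variable (v : ℕ → ℝ)

def pieceLine (k : ℕ) (t : ℝ) : ℝ := v k + (v (k + 1) - v k) * (t - k)

noncomputable def natInterp (t : ℝ) : ℝ := pieceLine v ⌊t⌋₊ t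

variable {v}

lemma pieceLine_natCast (k : ℕ) : pieceLine v k k = v k := by simp [pieceLine]

lemma pieceLine_succ_natCast (k : ℕ) : pieceLine v k ((k + 1 : ℕ) : ℝ) = v (k + 1) := by
  simp [pieceLine]

lemma natInterp_eq_pieceLine {i : ℕ} {t : ℝ} (ht : t ∈ Icc (i : ℝ) (i + 1)) :
    natInterp v t = pieceLine v i t := by
  rcases ht.2.lt_or_eq with hlt | rfl
  · rw [natInterp, (Nat.floor_eq_iff ((Nat.cast_nonneg i).trans ht.1)).2 ⟨ht.1, hlt⟩]
  · rw [natInterp, ← Nat.cast_add_one, Nat.floor_natCast, pieceLine_natCast,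
      pieceLine_succ_natCast]

lemma natInterp_natCast (n : ℕ) : natInterp v n = v n := by
  rw [natInterp, Nat.floor_natCast, pieceLine_natCast]

lemma pieceLine_succ_sub_pieceLine (k : ℕ) (t : ℝ) :
    pieceLine v (k + 1) t - pieceLine v k t =
      ((v (k + 2) - v (k + 1)) - (v (k + 1) - v k)) * (t - (k + 1)) := by
  simp only [pieceLine]; push_cast; ring

lemma integral_natInterp (i : ℕ) :
    ∫ t in (i : ℝ)..(i + 1), natInterp v t = (v i + v (i + 1)) / 2 := by
  rw [intervalIntegral.integral_congr fun t ht =>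
    natInterp_eq_pieceLine (by rwa [uIcc_of_le (by linarith)] at ht)]
  simp only [pieceLine]
  rw [intervalIntegral.integral_add intervalIntegrable_const
    ((by fun_prop : Continuous _).intervalIntegrable _ _),
    intervalIntegral.integral_const_mul, intervalIntegral.integral_comp_sub_right fun t => t]
  norm_num [integral_id]
  ring

variable (hv : Antitone fun k => v (k + 1) - v k)
include hv

lemma pieceLine_succ_le_of_le {k : ℕ} {t : ℝ} (ht : (k : ℝ) + 1 ≤ t) :
    pieceLine v (k + 1) t ≤ pieceLine v k t := by
  have := pieceLine_succ_sub_pieceLine (v := v) k t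
  nlinarith [sub_nonpos.2 (hv k.le_succ)]

lemma pieceLine_le_of_le_succ {k : ℕ} {t : ℝ} (ht : t ≤ (k : ℝ) + 1) :
    pieceLine v k t ≤ pieceLine v (k + 1) t := by
  have := pieceLine_succ_sub_pieceLine (v := v) k t
  nlinarith [sub_nonpos.2 (hv k.le_succ)]

lemma pieceLine_le_of_le_of_natCast_le {k m : ℕ} {t : ℝ} (hkm : k ≤ m) (ht : (m : ℝ) ≤ t) :
    pieceLine v m t ≤ pieceLine v k t := by
  induction m, hkm using Nat.le_induction with
  | base => rfl
  | succ m _ ih =>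
    push_cast at ht
    exact (pieceLine_succ_le_of_le hv ht).trans (ih (by linarith))

lemma pieceLine_le_of_ge_of_le_natCast_add_one {k m : ℕ} {t : ℝ} (hmk : m ≤ k) (ht : t ≤ (m : ℝ) + 1) :
    pieceLine v m t ≤ pieceLine v k t := by
  induction k, hmk using Nat.le_induction with
  | base => rfl
  | succ k hmk ih =>
    have : (m : ℝ) ≤ k := by exact_mod_cast hmk
    exact ih.trans (pieceLine_le_of_le_succ hv (by linarith))

lemma natInterp_le_pieceLine {t : ℝ} (ht : 0 ≤ t) (k : ℕ) : natInterp v t ≤ pieceLine v k t := by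
  rcases le_total k ⌊t⌋₊ with hk | hk
  · exact pieceLine_le_of_le_of_natCast_le hv hk (Nat.floor_le ht)
  · exact pieceLine_le_of_ge_of_le_natCast_add_one hv hk (Nat.lt_floor_add_one t).le

-- `natInterp v` is the lower envelope of the lines `pieceLine v k`.
lemma natInterp_concaveOn : ConcaveOn ℝ (Ici 0) (natInterp v) := by
  refine ⟨convex_Ici 0, fun x hx y hy a b ha hb hab => ?_⟩
  set m := ⌊a • x + b • y⌋₊
  have hline : pieceLine v m (a • x + b • y) = a * pieceLine v m x + b * pieceLine v m y := by
    simp only [pieceLine, smul_eq_mul]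
    linear_combination (v m - (v (m + 1) - v m) * m) * hab.symm
  calc a • natInterp v x + b • natInterp v y
      ≤ a * pieceLine v m x + b * pieceLine v m y := by
        simp only [smul_eq_mul]
        gcongr
        exacts [natInterp_le_pieceLine hv hx m, natInterp_le_pieceLine hv hy m]
    _ = natInterp v (a • x + b • y) := hline.symm

lemma natInterp_sub_le {x y : ℝ} (hx : 0 ≤ x) (hxy : x ≤ y) :
    natInterp v y - natInterp v x ≤ (v 1 - v 0) * (y - x) := by
  calc natInterp v y - natInterp v x ≤ pieceLine v ⌊x⌋₊ y - pieceLine v ⌊x⌋₊ x := by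
        gcongr
        exacts [natInterp_le_pieceLine hv (hx.trans hxy) _, le_refl _]
    _ = (v (⌊x⌋₊ + 1) - v ⌊x⌋₊) * (y - x) := by simp only [pieceLine]; ring
    _ ≤ (v 1 - v 0) * (y - x) :=
        mul_le_mul_of_nonneg_right (hv (Nat.zero_le _)) (sub_nonneg.2 hxy)

variable (hv0 : ∀ k, v k ≤ v (k + 1))
include hv0

lemma natInterp_monotoneOn : MonotoneOn (natInterp v) (Ici 0) := by
  intro x hx y _ hxy
  calc natInterp v x ≤ pieceLine v ⌊y⌋₊ x := natInterp_le_pieceLine hv hx _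
    _ ≤ pieceLine v ⌊y⌋₊ y := by
        simp only [pieceLine]
        gcongr
        exact sub_nonneg.2 (hv0 _)
    _ = natInterp v y := rfl

lemma natInterp_continuousOn : ContinuousOn (natInterp v) (Ici 0) := by
  refine (LipschitzOnWith.of_le_add_mul' (v 1 - v 0) fun x hx y hy => ?_).continuousOn
  rcases le_total x y with hxy | hyx
  · have := natInterp_monotoneOn hv hv0 hx hy hxy
    nlinarith [dist_nonneg (x := x) (y := y), hv0 0]
  · have := natInterp_sub_le hv hy hyx
    rw [Real.dist_eq, abs_of_nonneg (sub_nonneg.2 hyx)]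
    linarith

end PiecewiseLinear

theorem stmt16_general (c c' : ℝ → ℝ)
    (hcmono : MonotoneOn c (Set.Ici 0))
    (hcconc : ConcaveOn ℝ (Set.Ici 0) c)
    (hcderiv : ∀ y ≥ (0:ℝ), HasDerivWithinAt c (c' y) (Set.Ici 0) y)
    (hc'conv : ConvexOn ℝ (Set.Ici 0) c') :
    ∃ g : ℝ → ℝ,
      ContinuousOn g (Set.Ici 0) ∧
      MonotoneOn g (Set.Ici 0) ∧
      ConcaveOn ℝ (Set.Ici 0) g ∧
      (∀ i : ℕ, ∀ t ∈ Set.Icc (i:ℝ) ((i:ℝ)+1),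
        g t = g i + (g ((i:ℝ)+1) - g i) * (t - i)) ∧
      (∀ i : ℕ, (∫ t in (i:ℝ)..((i:ℝ)+1), g t) = c ((i:ℝ)+1)) := by
  set e : ℕ → ℝ := fun i => c (i + 2) - c (i + 1)
  have he_nonneg (i : ℕ) : 0 ≤ e i :=
    sub_nonneg.2 (hcmono (mem_Ici.2 (by positivity)) (mem_Ici.2 (by positivity)) (by linarith))
  have he_anti : Antitone e := antitone_nat_of_succ_le fun i => by
    have := hcconc.add_le_two_mul (x := i + 1) (mem_Ici.2 (by positivity))
      (mem_Ici.2 (by positivity))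
    simp only [e]; push_cast; ring_nf at this ⊢; linarith
  have he_conv (i : ℕ) : 2 * e (i + 1) ≤ e i + e (i + 2) := by
    have := monotoneOn_secondDiff_of_convexOn_deriv hcderiv hc'conv (a := i + 1) (b := i + 2)
      (mem_Ici.2 (by positivity)) (mem_Ici.2 (by positivity)) (by linarith)
    simp only [e]; push_cast; ring_nf at this ⊢; linarith
  obtain ⟨x, hx⟩ := exists_half_le_alternatingRec he_anti he_conv
  set δ := alternatingRec e x
  set v : ℕ → ℝ := fun i => c (i + 1) - δ i
  have hv_succ (i : ℕ) : v (i + 1) = c (i + 1) + δ i := by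
    simp only [v, δ, alternatingRec, e, Nat.cast_add_one, add_assoc, one_add_one_eq_two]; ring
  have hv_slope (i : ℕ) : v (i + 1) - v i = 2 * δ i := by rw [hv_succ]; ring
  have hv : Antitone fun i => v (i + 1) - v i := by
    simpa only [hv_slope] using (alternatingRec_antitone hx).const_mul zero_le_two
  have hv0 (i : ℕ) : v i ≤ v (i + 1) := by linarith [hv_slope i, hx i, he_nonneg i]
  refine ⟨natInterp v, natInterp_continuousOn hv hv0, natInterp_monotoneOn hv hv0,
    natInterp_concaveOn hv, fun i t ht => ?_, fun i => ?_⟩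
  · rw [natInterp_eq_pieceLine ht, natInterp_natCast, ← Nat.cast_add_one, natInterp_natCast]; rfl
  · rw [integral_natInterp, hv_succ]; ring

/-- given a nondecreasing, concave, differentiable marginal cost
`c : [0,∞) → [0,∞)` whose derivative `c'` is convex, there exists a continuous,
nondecreasing, concave function `g` on `[0,∞)` that is linear on each interval
`[i, i+1]` between consecutive integers, such that `∫_i^{i+1} g(t) dt = c(i+1)`
for every integer `i ≥ 0`. -/
theorem stmt16 (c c' : ℝ → ℝ)
    (hcnn : ∀ y ≥ (0:ℝ), 0 ≤ c y)
    (hcmono : MonotoneOn c (Set.Ici 0))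
    (hcconc : ConcaveOn ℝ (Set.Ici 0) c)
    (hcderiv : ∀ y ≥ (0:ℝ), HasDerivWithinAt c (c' y) (Set.Ici 0) y)
    (hc'conv : ConvexOn ℝ (Set.Ici 0) c') :
    ∃ g : ℝ → ℝ,
      ContinuousOn g (Set.Ici 0) ∧
      MonotoneOn g (Set.Ici 0) ∧
      ConcaveOn ℝ (Set.Ici 0) g ∧
      (∀ i : ℕ, ∀ t ∈ Set.Icc (i:ℝ) ((i:ℝ)+1),
        g t = g i + (g ((i:ℝ)+1) - g i) * (t - i)) ∧
      (∀ i : ℕ, (∫ t in (i:ℝ)..((i:ℝ)+1), g t) = c ((i:ℝ)+1)) :=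
  stmt16_general c c' hcmono hcconc hcderiv hc'conv
end
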